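/- arXiv:0807.4707 — 6 statements merged into one kernel-verified Lean document; each statement's English description precedes it below -/
import Mathlib

section
/- Let Θ be a compact metric space, r:Θ→Θ uniquely ergodic, and let f be a UEF monotone circle map homotopic to the identity, with lift F. Then the limit ρ(F) := lim_{n→∞} (F^n_θ(x)−x)/n exists, is independent of (θ,x), and the convergence is uniform on Θ×ℝ. Furthermore, ρ(F) depends continuously on F (with respect to uniform convergence of lifts). -/
/-!
Write `u_n(θ) = F^n_θ(0)`. Monotonicity and degree one make `u` an almost additive cocycle over
`r`: `|u_{m+n}(θ) - u_m(θ) - u_n(r^m θ)| ≤ 1`, and `F^n_θ(x) - x` differs from `u_n(θ)` by at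
most `1`. Summing the cocycle relation along an orbit segment of length `N` gives
`Σ_{j<N} u_n(r^j θ) = n u_N(θ) + O(N + n²)`, and by unique ergodicity the left-hand side is
`N ∫ u_n dμ + o(N)` uniformly in `θ` (weak limits of empirical measures are invariant, hence equal
to `μ`). So `u_N/N` is uniformly within `O(1/n)` of `(∫ u_n dμ)/n` for every `n`, which forces
uniform convergence to a constant `ρ`.

For continuity, `ρ(F)` is already determined up to `η + 1/n` by any `n` with
`|F^n_θ(0) - nρ| ≤ nη` for all `θ`, again by the cocycle relation; for fixed `n`, `F'^n` is
uniformly close to `F^n` when `F'` is uniformly close to `F`, by uniform equicontinuity of the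
fibre maps.
-/

open Filter MeasureTheory Topology

/-- The fibre iterates `F^n_θ = F_{r^{n-1}(θ)} ∘ ⋯ ∘ F_θ` of a fibrewise lift `F` over the
base map `r`. -/
noncomputable def fibIter {Θ : Type*} (r : Θ → Θ) (F : Θ → ℝ → ℝ) : ℕ → Θ → ℝ → ℝ
  | 0, _, x => x
  | n + 1, θ, x => F (r^[n] θ) (fibIter r F n θ x)

open Finset
open scoped ENNReal

section UniqueErgodicity

variable {X : Type*} [MeasurableSpace X]

/-- Averaging over `n + 1` orbit points makes this a probability measure for every `n`. -/
noncomputable def empiricalMeasure (r : X → X) (n : ℕ) (x : X) : ProbabilityMeasure X :=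
  ⟨((n + 1 : ℕ) : ℝ≥0∞)⁻¹ • ∑ k ∈ range (n + 1), Measure.dirac (r^[k] x), ⟨by
    simp [ENNReal.inv_mul_cancel]⟩⟩

lemma integral_empiricalMeasure [MeasurableSingletonClass X] (r : X → X) (n : ℕ) (x : X)
    (g : X → ℝ) : ∫ y, g y ∂(empiricalMeasure r n x : Measure X) =
      birkhoffAverage ℝ r g (n + 1) x := by
  simp [empiricalMeasure, integral_smul_measure, integral_finsetSum_measure,
    birkhoffAverage, birkhoffSum, integrable_dirac, ENNReal.toReal_add]

variable [MetricSpace X] [CompactSpace X] [BorelSpace X] {r : X → X}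

/-- The Krylov–Bogolyubov argument. -/
lemma map_eq_of_mapClusterPt_empiricalMeasure (hr : Continuous r) {ι : Type*} {l : Filter ι}
    {n : ι → ℕ} (hn : Tendsto n l atTop) (x : ι → X) {ν : ProbabilityMeasure X}
    (hν : MapClusterPt ν l fun i => empiricalMeasure r (n i) (x i)) :
    (ν : Measure X).map r = ν := by
  refine ext_of_forall_integral_eq_of_IsFiniteMeasure fun g => ?_
  rw [integral_map hr.aemeasurable g.continuous.aestronglyMeasurable]
  let defect : ProbabilityMeasure X → ℝ := fun ν =>
    ∫ y, g.compContinuous ⟨r, hr⟩ y ∂(ν : Measure X) - ∫ y, g y ∂(ν : Measure X)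
  have hdefect : Continuous defect :=
    (ProbabilityMeasure.continuous_integral_boundedContinuousFunction _).sub
      (ProbabilityMeasure.continuous_integral_boundedContinuousFunction _)
  have hlim : Tendsto (fun i => defect (empiricalMeasure r (n i) (x i))) l (𝓝 0) := by
    refine squeeze_zero_norm (a := fun i => 2 * ‖g‖ / ((n i + 1 : ℕ) : ℝ)) (fun i => ?_)
      ((tendsto_const_div_atTop_nhds_zero_nat _).comp ((tendsto_add_atTop_nat 1).comp hn))
    have hshift : birkhoffAverage ℝ r (g ∘ r) (n i + 1) (x i) =
        birkhoffAverage ℝ r g (n i + 1) (r (x i)) := by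
      simp only [birkhoffAverage, birkhoffSum, Function.comp_apply,
        ← Function.iterate_succ_apply' r, Function.iterate_succ_apply]
    simp only [defect, integral_empiricalMeasure]
    rw [BoundedContinuousFunction.coe_compContinuous, ContinuousMap.coe_mk, hshift,
      birkhoffAverage_apply_sub_birkhoffAverage, norm_smul, norm_inv,
      Real.norm_natCast, ← div_eq_inv_mul, ← dist_eq_norm]
    gcongr
    exact g.dist_le_two_norm _ _
  have : defect ν = 0 :=
    eq_of_nhds_neBot ((hν.continuousAt_comp hdefect.continuousAt).clusterPt.mono hlim)
  simpa [defect, sub_eq_zero] using this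

theorem tendsto_empiricalMeasure_of_uniqueErgodic (hr : Continuous r) (μ : ProbabilityMeasure X)
    (huniq : ∀ ν : Measure X, IsProbabilityMeasure ν → ν.map r = ν → ν = μ)
    {ι : Type*} {l : Filter ι} {n : ι → ℕ} (hn : Tendsto n l atTop) (x : ι → X) :
    Tendsto (fun i => empiricalMeasure r (n i) (x i)) l (𝓝 μ) :=
  tendsto_nhds_of_unique_mapClusterPt fun ν hν =>
    Subtype.ext (huniq ν inferInstance (map_eq_of_mapClusterPt_empiricalMeasure hr hn x hν))

theorem tendstoUniformly_birkhoffAverage_of_uniqueErgodic (hr : Continuous r)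
    (μ : ProbabilityMeasure X)
    (huniq : ∀ ν : Measure X, IsProbabilityMeasure ν → ν.map r = ν → ν = μ)
    {g : X → ℝ} (hg : Continuous g) :
    TendstoUniformly (birkhoffAverage ℝ r g) (fun _ => ∫ x, g x ∂(μ : Measure X)) atTop := by
  have hn : Tendsto (fun q : ℕ × X => q.1 - 1) (atTop ×ˢ ⊤) atTop :=
    (tendsto_sub_atTop_nat 1).comp tendsto_fst
  have h := ProbabilityMeasure.tendsto_iff_forall_integral_tendsto.1
    (tendsto_empiricalMeasure_of_uniqueErgodic hr μ huniq hn Prod.snd)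
    (BoundedContinuousFunction.mkOfCompact ⟨g, hg⟩)
  simp only [BoundedContinuousFunction.mkOfCompact_apply, ContinuousMap.coe_mk,
    integral_empiricalMeasure] at h
  refine tendsto_prod_top_iff.1 (h.congr' ?_)
  filter_upwards [(eventually_ge_atTop 1).prod_inl ⊤] with q hq
  rw [Nat.sub_add_cancel hq]
  rfl

end UniqueErgodicity

lemma sum_range_sub_eq_sum_range_sub (u : ℕ → ℝ) (m n : ℕ) :
    ∑ j ∈ range m, (u (j + n) - u j) = ∑ j ∈ range n, (u (m + j) - u j) := by
  have h₁ := sum_range_add_sub_sum_range u n m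
  have h₂ := sum_range_add_sub_sum_range u m n
  simp only [sum_sub_distrib, add_comm _ n]
  rw [add_comm n m] at h₁
  linarith

section AlmostAdditive

variable {X : Type*} {r : X → X} {u : ℕ → X → ℝ} {c : ℝ}

lemma abs_birkhoffSum_sub_mul_le
    (hu : ∀ m n x, |u (m + n) x - u m x - u n (r^[m] x)| ≤ c) {n : ℕ} {M : ℝ}
    (hM : ∀ j < n, ∀ x, |u j x| ≤ M) (N : ℕ) (x : X) :
    |birkhoffSum r (u n) N x - n * u N x| ≤ N * c + n * (2 * M + c) := by
  have hcoc : |birkhoffSum r (u n) N x - ∑ j ∈ range N, (u (j + n) x - u j x)| ≤ N * c := by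
    rw [birkhoffSum, ← sum_sub_distrib]
    calc _ ≤ ∑ j ∈ range N, |u n (r^[j] x) - (u (j + n) x - u j x)| := abs_sum_le_sum_abs _ _
      _ ≤ ∑ _j ∈ range N, c := sum_le_sum fun j _ => by
          rw [abs_sub_comm, sub_sub, ← sub_sub]; exact hu j n x
      _ = N * c := by simp
  have hblock : |∑ j ∈ range n, (u (N + j) x - u j x) - n * u N x| ≤ n * (2 * M + c) := by
    have hsplit : ∑ j ∈ range n, (u (N + j) x - u j x) - n * u N x =
        ∑ j ∈ range n, ((u (N + j) x - u N x - u j (r^[N] x)) + u j (r^[N] x) - u j x) := by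
      simp only [sum_sub_distrib, sum_add_distrib, sum_const, card_range, nsmul_eq_mul]
      ring
    rw [hsplit]
    calc _ ≤ ∑ j ∈ range n,
          |(u (N + j) x - u N x - u j (r^[N] x)) + u j (r^[N] x) - u j x| := abs_sum_le_sum_abs _ _
      _ ≤ ∑ _j ∈ range n, (c + M + M) := sum_le_sum fun j hj => by
          have hj := mem_range.1 hj
          calc _ ≤ |u (N + j) x - u N x - u j (r^[N] x)| + |u j (r^[N] x)| + |u j x| :=
                (abs_sub _ _).trans (add_le_add_left (abs_add_le _ _) _)
            _ ≤ c + M + M := add_le_add_three (hu N j x) (hM j hj _) (hM j hj x)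
      _ = n * (2 * M + c) := by simp; ring
  have htel := sum_range_sub_eq_sum_range_sub (fun j => u j x) N n
  rw [← htel] at hblock
  calc _ = |(birkhoffSum r (u n) N x - ∑ j ∈ range N, (u (j + n) x - u j x)) +
        (∑ j ∈ range N, (u (j + n) x - u j x) - n * u N x)| := by rw [sub_add_sub_cancel]
    _ ≤ _ := (abs_add_le _ _).trans (add_le_add hcoc hblock)

lemma abs_sub_le_of_forall_abs_sub_mul_le
    (hu : ∀ m n x, |u (m + n) x - u m x - u n (r^[m] x)| ≤ c) {x₀ : X} {ρ : ℝ}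
    (hρ : Tendsto (fun N : ℕ => u N x₀ / N) atTop (𝓝 ρ)) {n : ℕ} (hn : 0 < n) {α η : ℝ}
    (hα : ∀ x, |u n x - n * α| ≤ n * η) : |ρ - α| ≤ η + c / n := by
  have hc : 0 ≤ c := (abs_nonneg _).trans (hu 0 0 x₀)
  have hblock : ∀ k x, |u ((k + 1) * n) x - (k + 1) * n * α| ≤ (k + 1) * (n * η + c) := by
    intro k
    induction k with
    | zero => intro x; simpa using (hα x).trans (by linarith)
    | succ k ih =>
      intro x
      rw [show (k + 1 + 1) * n = (k + 1) * n + n by ring]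
      calc _ = |(u ((k + 1) * n + n) x - u ((k + 1) * n) x - u n (r^[(k + 1) * n] x)) +
              (u ((k + 1) * n) x - (k + 1) * n * α) + (u n (r^[(k + 1) * n] x) - n * α)| := by
            push_cast; ring_nf
        _ ≤ c + (k + 1) * (n * η + c) + n * η :=
            (abs_add_three _ _ _).trans (add_le_add_three (hu _ _ _) (ih x) (hα _))
        _ = _ := by push_cast; ring
  have hnk : Tendsto (fun k : ℕ => (k + 1) * n) atTop atTop :=
    tendsto_atTop_mono (fun k => Nat.le_mul_of_pos_right _ hn) (tendsto_add_atTop_nat 1)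
  refine le_of_tendsto (((hρ.comp hnk).sub_const α).abs) (Eventually.of_forall fun k => ?_)
  have hpos : (0 : ℝ) < (k + 1) * n := by positivity
  have := hblock k x₀
  simp only [Function.comp_apply]
  push_cast
  rw [div_sub' hpos.ne', abs_div, abs_of_pos hpos, div_le_iff₀ hpos]
  calc _ ≤ (k + 1) * (n * η + c) := by simpa [mul_comm] using this
    _ = (η + c / n) * ((k + 1) * n) := by field_simp

end AlmostAdditive

section UniquelyErgodicCocycle

variable {X : Type*} [MetricSpace X] [CompactSpace X] [MeasurableSpace X] [BorelSpace X]
  {r : X → X} {u : ℕ → X → ℝ} {c : ℝ}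

lemma eventually_abs_div_sub_integral_div_le (hr : Continuous r) (μ : ProbabilityMeasure X)
    (huniq : ∀ ν : Measure X, IsProbabilityMeasure ν → ν.map r = ν → ν = μ)
    (hcont : ∀ n, Continuous (u n)) (hu : ∀ m n x, |u (m + n) x - u m x - u n (r^[m] x)| ≤ c)
    {n : ℕ} (hn : 0 < n) :
    ∀ᶠ N : ℕ in atTop, ∀ x, |u N x / N - (∫ y, u n y ∂(μ : Measure X)) / n| ≤ (c + 2) / n := by
  obtain ⟨M, hM⟩ : ∃ M, ∀ j < n, ∀ x, |u j x| ≤ M := by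
    choose M hM using fun j => isCompact_univ.exists_bound_of_continuousOn (hcont j).continuousOn
    obtain ⟨M', hM'⟩ := ((range n).image M).exists_le
    exact ⟨M', fun j hj x => (hM j x (Set.mem_univ x)).trans
      (hM' _ (mem_image_of_mem _ (mem_range.2 hj)))⟩
  have hpos : (0 : ℝ) < n := by exact_mod_cast hn
  filter_upwards [Metric.tendstoUniformly_iff.1
      (tendstoUniformly_birkhoffAverage_of_uniqueErgodic hr μ huniq (hcont n)) 1 one_pos,
    (tendsto_const_div_atTop_nhds_zero_nat (2 * M + c)).eventually (gt_mem_nhds (inv_pos.2 hpos)),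
    eventually_gt_atTop 0] with N hergodic hlarge hN x
  set I := ∫ y, u n y ∂(μ : Measure X)
  have hNpos : (0 : ℝ) < N := by exact_mod_cast hN
  have hsum := abs_birkhoffSum_sub_mul_le hu hM N x
  have havg : |birkhoffSum r (u n) N x - N * I| < N := by
    have := hergodic x
    rw [dist_comm, Real.dist_eq, birkhoffAverage, smul_eq_mul, ← div_eq_inv_mul,
      div_sub' hNpos.ne', abs_div, abs_of_pos hNpos, div_lt_one hNpos] at this
    linarith
  have hlarge' : n * (2 * M + c) < N := by
    rw [div_lt_iff₀ hNpos] at hlarge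
    rwa [inv_mul_eq_div, lt_div_iff₀ hpos, mul_comm] at hlarge
  have key : |u N x * n - N * I| ≤ (c + 2) * N := by
    calc _ = |(birkhoffSum r (u n) N x - N * I) - (birkhoffSum r (u n) N x - n * u N x)| := by
          ring_nf
      _ ≤ _ := (abs_sub _ _).trans (by linarith)
  rw [div_sub_div _ _ hNpos.ne' hpos.ne', abs_div, abs_of_pos (mul_pos hNpos hpos),
    div_le_div_iff₀ (by positivity) hpos]
  calc _ ≤ (c + 2) * N * n := mul_le_mul_of_nonneg_right key hpos.le
    _ = _ := by ring

theorem exists_tendstoUniformly_div_of_uniqueErgodic [Nonempty X] (hr : Continuous r)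
    (μ : ProbabilityMeasure X)
    (huniq : ∀ ν : Measure X, IsProbabilityMeasure ν → ν.map r = ν → ν = μ)
    (hcont : ∀ n, Continuous (u n)) (hu : ∀ m n x, |u (m + n) x - u m x - u n (r^[m] x)| ≤ c) :
    ∃ ρ, TendstoUniformly (fun N x => u N x / N) (fun _ => ρ) atTop := by
  set a : ℕ → ℝ := fun n => (∫ y, u n y ∂(μ : Measure X)) / n
  have happrox : ∀ n, 0 < n → ∀ᶠ N : ℕ in atTop, ∀ x, |u N x / N - a n| ≤ (c + 2) / n :=
    fun n hn => eventually_abs_div_sub_integral_div_le hr μ huniq hcont hu hn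
  obtain ⟨x₀⟩ := ‹Nonempty X›
  have hc : 0 ≤ c := (abs_nonneg _).trans (hu 0 0 x₀)
  have hcauchy : CauchySeq a := by
    refine Metric.cauchySeq_iff'.2 fun ε hε => ?_
    obtain ⟨K, hK⟩ := exists_nat_gt (2 * (c + 2) / ε)
    have hKpos : (0 : ℝ) < K := (by positivity : 0 < 2 * (c + 2) / ε).trans hK
    refine ⟨K, fun n hn => ?_⟩
    have hnK : (K : ℝ) ≤ n := by exact_mod_cast hn
    obtain ⟨N, hNn, hNK⟩ := ((happrox n (by exact_mod_cast hKpos.trans_le hnK)).and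
      (happrox K (by exact_mod_cast hKpos))).exists
    have hnK' : (c + 2) / n ≤ (c + 2) / K := by gcongr
    rw [div_lt_iff₀ hε, ← div_lt_iff₀' hKpos] at hK
    calc dist (a n) (a K) ≤ |u N x₀ / N - a n| + |u N x₀ / N - a K| := by
          simpa only [Real.dist_eq] using dist_triangle_left (a n) (a K) (u N x₀ / N)
      _ < ε := by
          linarith [hNn x₀, hNK x₀, show 2 * (c + 2) / K = (c + 2) / K + (c + 2) / K by ring]
  obtain ⟨ρ, hρ⟩ := cauchySeq_tendsto_of_complete hcauchy
  refine ⟨ρ, Metric.tendstoUniformly_iff.2 fun ε hε => ?_⟩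
  obtain ⟨n, hn, hnε, hnρ⟩ : ∃ n : ℕ, 0 < n ∧ (c + 2) / n < ε / 2 ∧ dist (a n) ρ < ε / 2 :=
    ((eventually_gt_atTop 0).and
      (((tendsto_const_div_atTop_nhds_zero_nat (c + 2)).eventually (gt_mem_nhds (half_pos hε))).and
        (Metric.tendsto_nhds.1 hρ _ (half_pos hε)))).exists
  filter_upwards [happrox n hn] with N hN x
  calc dist ρ (u N x / N) ≤ dist ρ (a n) + dist (u N x / N) (a n) := dist_triangle_right _ _ _
    _ < ε := by linarith [dist_comm ρ (a n), Real.dist_eq (u N x / N) (a n), hN x]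

end UniquelyErgodicCocycle

section FibreIterates

variable {Θ : Type*} {r : Θ → Θ} {F : Θ → ℝ → ℝ}

lemma fibIter_add (m n : ℕ) (θ : Θ) (x : ℝ) :
    fibIter r F (m + n) θ x = fibIter r F n (r^[m] θ) (fibIter r F m θ x) := by
  induction n with
  | zero => rfl
  | succ n ih => rw [← add_assoc, fibIter, ih, fibIter, ← Function.iterate_add_apply, add_comm m]

lemma continuous_fibIter [TopologicalSpace Θ] (hr : Continuous r)
    (hF : Continuous fun p : Θ × ℝ => F p.1 p.2) (n : ℕ) :
    Continuous fun p : Θ × ℝ => fibIter r F n p.1 p.2 := by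
  induction n with
  | zero => exact continuous_snd
  | succ n ih => exact hF.comp (((hr.iterate n).comp continuous_fst).prodMk ih)

lemma fibIter_add_one (hFper : ∀ θ (x : ℝ) (k : ℤ), F θ (x + k) = F θ x + k) (n : ℕ) (θ : Θ)
    (x : ℝ) : fibIter r F n θ (x + 1) = fibIter r F n θ x + 1 := by
  induction n with
  | zero => rfl
  | succ n ih => simpa [fibIter, ih] using hFper (r^[n] θ) (fibIter r F n θ x) 1

lemma monotone_fibIter (hFmono : ∀ θ, Monotone (F θ)) (n : ℕ) (θ : Θ) :
    Monotone (fibIter r F n θ) := by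
  induction n with
  | zero => exact monotone_id
  | succ n ih => exact (hFmono _).comp ih

noncomputable def fibIterLift (r : Θ → Θ) (hFper : ∀ θ (x : ℝ) (k : ℤ), F θ (x + k) = F θ x + k)
    (hFmono : ∀ θ, Monotone (F θ)) (n : ℕ) (θ : Θ) : CircleDeg1Lift :=
  ⟨⟨fibIter r F n θ, monotone_fibIter hFmono n θ⟩, fibIter_add_one hFper n θ⟩

variable (hFper : ∀ θ (x : ℝ) (k : ℤ), F θ (x + k) = F θ x + k) (hFmono : ∀ θ, Monotone (F θ))
include hFper hFmono

lemma abs_fibIter_sub_sub_fibIter_zero_le (n : ℕ) (θ : Θ) (x : ℝ) :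
    |fibIter r F n θ x - x - fibIter r F n θ 0| ≤ 1 := by
  have h₁ := (fibIterLift r hFper hFmono n θ).map_le_of_map_zero x
  have h₂ := (fibIterLift r hFper hFmono n θ).le_map_of_map_zero x
  have := Int.ceil_lt_add_one x
  have := Int.sub_one_lt_floor x
  simp only [fibIterLift, CircleDeg1Lift.coe_mk, OrderHom.coe_mk] at h₁ h₂
  rw [abs_le]
  constructor <;> linarith

lemma abs_fibIter_add_sub_le (m n : ℕ) (θ : Θ) :
    |fibIter r F (m + n) θ 0 - fibIter r F m θ 0 - fibIter r F n (r^[m] θ) 0| ≤ 1 := by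
  have := (fibIterLift r hFper hFmono n (r^[m] θ)).dist_map_map_zero_lt
    (fibIterLift r hFper hFmono m θ)
  simp only [fibIterLift, CircleDeg1Lift.coe_mk, OrderHom.coe_mk, Real.dist_eq] at this
  rw [fibIter_add, sub_sub, abs_sub_comm, add_comm]
  exact this.le

lemma tendstoUniformly_fibIter_sub_div {ρ : ℝ}
    (h : TendstoUniformly (fun n θ => fibIter r F n θ 0 / n) (fun _ => ρ) atTop) :
    TendstoUniformly (fun n (p : Θ × ℝ) => (fibIter r F n p.1 p.2 - p.2) / n)
      (fun _ => ρ) atTop := by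
  rw [Metric.tendstoUniformly_iff] at h ⊢
  intro ε hε
  filter_upwards [h (ε / 2) (half_pos hε),
    (tendsto_const_div_atTop_nhds_zero_nat 1).eventually (gt_mem_nhds (half_pos hε)),
    eventually_gt_atTop 0] with n hn hn' hnpos p
  have hdev : dist ((fibIter r F n p.1 p.2 - p.2) / n) (fibIter r F n p.1 0 / n) ≤ 1 / n := by
    rw [Real.dist_eq, ← sub_div, abs_div, Nat.abs_cast]
    gcongr
    exact abs_fibIter_sub_sub_fibIter_zero_le hFper hFmono n p.1 p.2
  calc _ ≤ dist ρ (fibIter r F n p.1 0 / n) +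
        dist ((fibIter r F n p.1 p.2 - p.2) / n) (fibIter r F n p.1 0 / n) :=
      dist_triangle_right _ _ _
    _ < ε := by linarith [hn p.1]

end FibreIterates

section Perturbation

variable {Θ : Type*} {r : Θ → Θ} {F : Θ → ℝ → ℝ}

lemma uniformEquicontinuous_of_continuous_of_periodic [PseudoMetricSpace Θ] [CompactSpace Θ]
    (hF : Continuous fun p : Θ × ℝ => F p.1 p.2)
    (hFper : ∀ θ (x : ℝ) (k : ℤ), F θ (x + k) = F θ x + k) : UniformEquicontinuous F := by
  rw [Metric.uniformEquicontinuous_iff]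
  intro ε hε
  obtain ⟨δ, hδ, hFδ⟩ := Metric.uniformContinuousOn_iff.1
    ((isCompact_univ.prod (isCompact_Icc (a := (-1 : ℝ)) (b := 2))).uniformContinuousOn_of_continuous
      hF.continuousOn) ε hε
  refine ⟨min δ 1, by positivity, fun x y hxy θ => ?_⟩
  have hxy' := abs_lt.1 (Real.dist_eq x y ▸ hxy)
  have hshift : ∀ z, F θ z = F θ (z - ⌊x⌋) + ⌊x⌋ := fun z => by rw [← hFper, sub_add_cancel]
  have hfract := Int.floor_le x
  have hfract' := Int.lt_floor_add_one x
  rw [hshift x, hshift y, dist_add_right]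
  refine hFδ (θ, x - ⌊x⌋) ⟨trivial, ?_, ?_⟩ (θ, y - ⌊x⌋) ⟨trivial, ?_, ?_⟩ ?_
  · linarith
  · linarith
  · linarith [min_le_right δ 1]
  · linarith [min_le_right δ 1]
  · rw [Prod.dist_eq, dist_self, dist_sub_right]
    exact max_lt hδ (hxy.trans_le (min_le_left _ _))

lemma exists_abs_fibIter_sub_le_of_uniformEquicontinuous [PseudoMetricSpace Θ]
    (hF : UniformEquicontinuous F) (n : ℕ) {η : ℝ} (hη : 0 < η) :
    ∃ δ > 0, ∀ G : Θ → ℝ → ℝ, (∀ θ x, |G θ x - F θ x| ≤ δ) →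
      ∀ θ x, |fibIter r G n θ x - fibIter r F n θ x| ≤ η := by
  induction n generalizing η with
  | zero => exact ⟨1, one_pos, fun G _ θ x => by simpa [fibIter] using hη.le⟩
  | succ n ih =>
    obtain ⟨δ₁, hδ₁, hF₁⟩ := Metric.uniformEquicontinuous_iff.1 hF (η / 2) (half_pos hη)
    obtain ⟨δ₂, hδ₂, hF₂⟩ := ih (half_pos hδ₁)
    refine ⟨min δ₂ (η / 2), by positivity, fun G hG θ x => ?_⟩
    have hGF := hG (r^[n] θ) (fibIter r G n θ x)
    have hstep := hF₁ (fibIter r G n θ x) (fibIter r F n θ x) (by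
      rw [Real.dist_eq]
      linarith [hF₂ G (fun θ x => (hG θ x).trans (min_le_left _ _)) θ x]) (r^[n] θ)
    rw [Real.dist_eq] at hstep
    calc _ ≤ |G (r^[n] θ) (fibIter r G n θ x) - F (r^[n] θ) (fibIter r G n θ x)| +
          |F (r^[n] θ) (fibIter r G n θ x) - F (r^[n] θ) (fibIter r F n θ x)| :=
        abs_sub_le _ _ _
      _ ≤ η := by linarith [min_le_right δ₂ (η / 2)]

lemma exists_pos_abs_sub_le_of_uniformEquicontinuous [PseudoMetricSpace Θ]
    (hF : UniformEquicontinuous F) {ρ : ℝ}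
    (hρ : TendstoUniformly (fun n θ => fibIter r F n θ 0 / n) (fun _ => ρ) atTop)
    {ε : ℝ} (hε : 0 < ε) :
    ∃ δ > 0, ∀ G : Θ → ℝ → ℝ, (∀ θ (x : ℝ) (k : ℤ), G θ (x + k) = G θ x + k) →
      (∀ θ, Monotone (G θ)) → (∀ θ x, |G θ x - F θ x| ≤ δ) → ∀ (ρ' : ℝ) (θ₀ : Θ),
      Tendsto (fun n : ℕ => fibIter r G n θ₀ 0 / n) atTop (𝓝 ρ') → |ρ' - ρ| ≤ ε := by
  obtain ⟨n, hn, hnρ, hnε⟩ : ∃ n : ℕ, 0 < n ∧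
      (∀ θ, dist ρ (fibIter r F n θ 0 / n) < ε / 4) ∧ 1 / (n : ℝ) < ε / 4 :=
    ((eventually_gt_atTop 0).and ((Metric.tendstoUniformly_iff.1 hρ _ (by positivity)).and
      ((tendsto_const_div_atTop_nhds_zero_nat 1).eventually (gt_mem_nhds (by positivity))))).exists
  have hnpos : (0 : ℝ) < n := by exact_mod_cast hn
  obtain ⟨δ, hδ, hclose⟩ := exists_abs_fibIter_sub_le_of_uniformEquicontinuous (r := r) hF n
    (η := n * (ε / 4)) (by positivity)
  refine ⟨δ, hδ, fun G hGper hGmono hGF ρ' θ₀ hρ' => ?_⟩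
  have hGn : ∀ θ, |fibIter r G n θ 0 - n * ρ| ≤ n * (ε / 2) := fun θ => by
    have hFn : |fibIter r F n θ 0 - n * ρ| ≤ n * (ε / 4) := by
      have := hnρ θ
      rw [dist_comm, Real.dist_eq, div_sub' hnpos.ne', abs_div, Nat.abs_cast,
        div_lt_iff₀ hnpos] at this
      simpa only [mul_comm] using this.le
    calc _ ≤ |fibIter r G n θ 0 - fibIter r F n θ 0| + |fibIter r F n θ 0 - n * ρ| :=
          abs_sub_le _ _ _
      _ ≤ n * (ε / 4) + n * (ε / 4) := add_le_add (hclose G hGF θ 0) hFn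
      _ = n * (ε / 2) := by ring
  have := abs_sub_le_of_forall_abs_sub_mul_le (abs_fibIter_add_sub_le hGper hGmono)
    (u := fun n θ => fibIter r G n θ 0) hρ' hn hGn
  linarith

end Perturbation

theorem stmt7_general {Θ : Type*} [MetricSpace Θ] [CompactSpace Θ] [Nonempty Θ]
    [MeasurableSpace Θ] [BorelSpace Θ]
    (r : Θ → Θ) (hr : Continuous r)
    (hUE : ∃! μ : Measure Θ, IsProbabilityMeasure μ ∧ μ.map r = μ)
    (F : Θ → ℝ → ℝ) (hFc : Continuous fun p : Θ × ℝ => F p.1 p.2)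
    (hFper : ∀ θ (x : ℝ) (k : ℤ), F θ (x + k) = F θ x + k)
    (hFmono : ∀ θ, Monotone (F θ)) :
    ∃ ρ : ℝ,
      -- the limit `ρ(F) = lim (F^n_θ(x) − x)/n` exists, is independent of `(θ,x)`,
      -- and the convergence is uniform on `Θ × ℝ`
      TendstoUniformly (fun (n : ℕ) (p : Θ × ℝ) => (fibIter r F n p.1 p.2 - p.2) / n)
        (fun _ => ρ) atTop ∧
      -- `ρ(F)` depends continuously on `F` (w.r.t. uniform convergence of lifts)
      ∀ ε > 0, ∃ δ > 0, ∀ F' : Θ → ℝ → ℝ,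
        Continuous (fun p : Θ × ℝ => F' p.1 p.2) →
        (∀ θ (x : ℝ) (k : ℤ), F' θ (x + k) = F' θ x + k) →
        (∀ θ, Monotone (F' θ)) →
        (∀ θ x, |F' θ x - F θ x| ≤ δ) →
        ∀ ρ' : ℝ,
          (∀ θ x, Tendsto (fun n : ℕ => (fibIter r F' n θ x - x) / n) atTop (𝓝 ρ')) →
          |ρ' - ρ| ≤ ε := by
  obtain ⟨μ, ⟨hμ, -⟩, huniq⟩ := hUE
  obtain ⟨ρ, hρ⟩ := exists_tendstoUniformly_div_of_uniqueErgodic hr ⟨μ, hμ⟩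
    (fun ν hν hνr => huniq ν ⟨hν, hνr⟩)
    (fun n => (continuous_fibIter hr hFc n).comp (Continuous.prodMk_left 0))
    (abs_fibIter_add_sub_le hFper hFmono)
  refine ⟨ρ, tendstoUniformly_fibIter_sub_div hFper hFmono hρ, fun ε hε => ?_⟩
  obtain ⟨δ, hδ, hρF⟩ := exists_pos_abs_sub_le_of_uniformEquicontinuous
    (uniformEquicontinuous_of_continuous_of_periodic hFc hFper) hρ hε
  obtain ⟨θ₀⟩ := ‹Nonempty Θ›
  exact ⟨δ, hδ, fun G _ hGper hGmono hGF ρ' hρ' =>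
    hρF G hGper hGmono hGF ρ' θ₀ (by simpa using hρ' θ₀ 0)⟩

theorem stmt7 {Θ : Type*} [MetricSpace Θ] [CompactSpace Θ] [Nonempty Θ]
    [MeasurableSpace Θ] [BorelSpace Θ]
    (r : Θ → Θ) (hr : Continuous r)
    (hUE : ∃! μ : Measure Θ, IsProbabilityMeasure μ ∧ μ.map r = μ)
    (f : Θ × AddCircle (1 : ℝ) → Θ × AddCircle (1 : ℝ)) (hf : Continuous f)
    (F : Θ → ℝ → ℝ) (hFc : Continuous fun p : Θ × ℝ => F p.1 p.2)
    (hFper : ∀ θ (x : ℝ) (k : ℤ), F θ (x + k) = F θ x + k)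
    (hFmono : ∀ θ, Monotone (F θ))
    (hlift : ∀ θ (x : ℝ), f (θ, (x : AddCircle (1 : ℝ))) = (r θ, ((F θ x : ℝ) : AddCircle (1 : ℝ))))
    (hhom : (⟨f, hf⟩ : C(Θ × AddCircle (1 : ℝ), Θ × AddCircle (1 : ℝ))).Homotopic
      ⟨fun p => (r p.1, p.2), (hr.comp continuous_fst).prodMk continuous_snd⟩) :
    ∃ ρ : ℝ,
      -- the limit `ρ(F) = lim (F^n_θ(x) − x)/n` exists, is independent of `(θ,x)`,
      -- and the convergence is uniform on `Θ × ℝ`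
      TendstoUniformly (fun (n : ℕ) (p : Θ × ℝ) => (fibIter r F n p.1 p.2 - p.2) / n)
        (fun _ => ρ) atTop ∧
      -- `ρ(F)` depends continuously on `F` (w.r.t. uniform convergence of lifts)
      ∀ ε > 0, ∃ δ > 0, ∀ F' : Θ → ℝ → ℝ,
        Continuous (fun p : Θ × ℝ => F' p.1 p.2) →
        (∀ θ (x : ℝ) (k : ℤ), F' θ (x + k) = F' θ x + k) →
        (∀ θ, Monotone (F' θ)) →
        (∀ θ x, |F' θ x - F θ x| ≤ δ) →
        ∀ ρ' : ℝ,
          (∀ θ x, Tendsto (fun n : ℕ => (fibIter r F' n θ x - x) / n) atTop (𝓝 ρ')) →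
          |ρ' - ρ| ≤ ε :=
  stmt7_general r hr hUE F hFc hFper hFmono
end

section
/- There exists a continuous mapping ℝ × [0,1] × E → ℝ, (x,t,G) ↦ G_t(x), with the following properties: (i) for each G ∈ E, the family (G_t)_{t∈[0,1]} is a homotopy between G⁻ and G⁺, that is G_0 = G⁻ and G_1 = G⁺; (ii) for all t ∈ [0,1], G_t ∈ E_mon; (iii) for every x ∈ ℝ, the map t ↦ G_t(x) is monotonically increasing; (iv) if G_t(x) ≠ G(x), then x ∈ U(G_t). (One such mapping is G_t(x) = inf_{ζ≥x} sup_{ξ∈[ζ−t,ζ]} G(ξ).) -/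
open Filter Topology UniformConvergence

/-- The space `E` of degree-one lifts of circle endomorphisms, carrying the topology of
uniform convergence (realised as a subtype of `ℝ →ᵤ ℝ`). -/
abbrev LiftSpace : Type :=
  {G : ℝ →ᵤ ℝ // Continuous (UniformFun.toFun G) ∧
    ∀ (x : ℝ) (k : ℤ), UniformFun.toFun G (x + k) = UniformFun.toFun G x + k}

/-- `U(G)`: the union of the interiors of the plateaus of `G`, i.e. the set of points `x`
such that `G([x−ε,x+ε]) = {G(x)}` for some `ε > 0`. -/
def plateauU (G : ℝ → ℝ) : Set ℝ :=
  {x | ∃ ε > 0, ∀ y ∈ Set.Icc (x - ε) (x + ε), G y = G x}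

/-!
Take `G_t := tailInf (slidingMax t G)`, i.e. `G_t x = inf_{ζ ≥ x} sup G[ζ - t, ζ]`. Widening the
window raises the sliding maximum, so `G_t` increases with `t`. At `t = 0` this is `G⁻`. At `t = 1`
the window is a full period, so `G (u + k) = G u + k` makes the sliding maximum equal to `G⁺`,
which is monotone and hence fixed by the tail infimum.

For joint continuity, the window is `ζ - t + [0, 1] • t`, and by periodicity the tail infimum is
attained on `[x, x + 1]`. Both operations are therefore extrema of a jointly continuous function
over the compact set `[0, 1]`.

For the plateaus, let `F := slidingMax t G ≥ G`. If `G_t x < F x`, then `F` stays above `G_t x`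
near `x`, so the tail infimum cannot move there. If `G_t x > G x`, then `G` stays below `G_t x`
near `x`; these values cannot raise the sliding maximum to `G_t x`, which again freezes `G_t` near
`x`.
-/

open Set

structure IsDegOneLift (F : ℝ → ℝ) : Prop where
  continuous : Continuous F
  map_add_int (x : ℝ) (k : ℤ) : F (x + k) = F x + k

noncomputable def slidingMax (t : ℝ) (G : ℝ → ℝ) (ζ : ℝ) : ℝ :=
  sSup (G '' Icc (ζ - t) ζ)

noncomputable def tailInf (F : ℝ → ℝ) (x : ℝ) : ℝ :=
  sInf (F '' Ici x)

theorem UniformFun.continuous_uncurry_toFun {X α β : Type*} [TopologicalSpace X]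
    [TopologicalSpace α] [UniformSpace β] {g : X → α →ᵤ β} (hg : Continuous g)
    (hcont : ∀ p, Continuous (toFun (g p))) :
    Continuous fun q : α × X => toFun (g q.2) q.1 := by
  rw [continuous_iff_continuousAt]
  rintro ⟨y, p⟩
  have hunif : TendstoUniformly (fun q : α × X => toFun (g q.2)) (toFun (g p)) (𝓝 (y, p)) :=
    UniformFun.tendsto_iff_tendstoUniformly.1 ((hg.comp continuous_snd).tendsto (y, p))
  exact hunif.tendsto_comp (hcont p).continuousAt continuous_fst.continuousAt

theorem exists_forall_Icc_of_eventually {P : ℝ → Prop} {x : ℝ} (h : ∀ᶠ u in 𝓝 x, P u) :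
    ∃ δ > 0, ∀ u ∈ Icc (x - δ) (x + δ), P u := by
  obtain ⟨δ, hδ, hP⟩ := Metric.nhds_basis_closedBall.eventually_iff.1 h
  exact ⟨δ, hδ, fun u hu => hP (by rwa [Real.closedBall_eq_Icc])⟩

theorem Continuous.bddAbove_image_Icc {G : ℝ → ℝ} (hG : Continuous G) (a b : ℝ) :
    BddAbove (G '' Icc a b) :=
  isCompact_Icc.bddAbove_image hG.continuousOn

section TailInf

variable {F F' : ℝ → ℝ} {x y ζ c : ℝ}

theorem tailInf_le (hF : BddBelow (F '' Ici x)) (h : x ≤ ζ) : tailInf F x ≤ F ζ :=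
  csInf_le hF (mem_image_of_mem F h)

theorem le_tailInf (h : ∀ ζ, x ≤ ζ → c ≤ F ζ) : c ≤ tailInf F x :=
  le_csInf (nonempty_Ici.image F) (forall_mem_image.2 h)

theorem monotone_tailInf (hF : ∀ x, BddBelow (F '' Ici x)) : Monotone (tailInf F) :=
  fun x _ hxy => le_tailInf fun _ hζ => tailInf_le (hF x) (hxy.trans hζ)

theorem tailInf_le_tailInf (hF : BddBelow (F '' Ici x)) (h : ∀ ζ, F ζ ≤ F' ζ) :
    tailInf F x ≤ tailInf F' x :=
  le_tailInf fun ζ hζ => (tailInf_le hF hζ).trans (h ζ)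

theorem tailInf_eq_of_monotone (hF : Monotone F) : tailInf F x = F x :=
  (hF.map_isLeast isLeast_Ici).csInf_eq

theorem tailInf_eq_min (hF : BddBelow (F '' Ici x)) (hxy : x ≤ y) :
    tailInf F x = min (sInf (F '' Icc x y)) (tailInf F y) := by
  rw [tailInf, ← Icc_union_Ici_eq_Ici hxy, image_union]
  exact csInf_union (hF.mono (image_mono Icc_subset_Ici_self)) ((nonempty_Icc.2 hxy).image F)
    (hF.mono (image_mono (Ici_subset_Ici.2 hxy))) (nonempty_Ici.image F)

theorem tailInf_eq_of_forall_Icc (hF : ∀ x, BddBelow (F '' Ici x)) (hyx : y ≤ x)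
    (h : ∀ ζ ∈ Icc y x, tailInf F x ≤ F ζ) : tailInf F y = tailInf F x := by
  refine le_antisymm (monotone_tailInf hF hyx) (le_tailInf fun ζ hζ => ?_)
  rcases le_total ζ x with hζx | hxζ
  · exact h ζ ⟨hζ, hζx⟩
  · exact tailInf_le (hF x) hxζ

end TailInf

namespace IsDegOneLift

variable {F : ℝ → ℝ} {x ζ : ℝ}

theorem le_map_add_int (hF : IsDegOneLift F) (x : ℝ) {k : ℤ} (hk : 0 ≤ k) :
    F x ≤ F (x + k) := by
  rw [hF.map_add_int]
  exact le_add_of_nonneg_right (Int.cast_nonneg hk)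

theorem exists_mem_Icc_le (hF : IsDegOneLift F) (hxζ : x ≤ ζ) :
    ∃ ζ' ∈ Icc x (x + 1), F ζ' ≤ F ζ := by
  refine ⟨ζ - ⌊ζ - x⌋, ⟨?_, ?_⟩, ?_⟩
  · linarith [Int.floor_le (ζ - x)]
  · linarith [Int.lt_floor_add_one (ζ - x)]
  · simpa using hF.le_map_add_int (ζ - ⌊ζ - x⌋) (Int.floor_nonneg.2 (sub_nonneg.2 hxζ))

theorem bddBelow_image_Ici (hF : IsDegOneLift F) (x : ℝ) : BddBelow (F '' Ici x) := by
  obtain ⟨m, hm⟩ := (isCompact_Icc (a := x) (b := x + 1)).bddBelow_image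
    hF.continuous.continuousOn
  refine ⟨m, forall_mem_image.2 fun ζ hζ => ?_⟩
  obtain ⟨ζ', hζ', hle⟩ := hF.exists_mem_Icc_le hζ
  exact (hm (mem_image_of_mem F hζ')).trans hle

theorem tailInf_eq_sInf_Icc (hF : IsDegOneLift F) (x : ℝ) :
    tailInf F x = sInf ((fun s => F (x + s)) '' Icc 0 1) := by
  rw [← image_image F (x + ·), image_const_add_Icc, add_zero]
  refine csInf_eq_csInf_of_forall_exists_le (forall_mem_image.2 fun ζ hζ => ?_)
    (forall_mem_image.2 fun ζ hζ => ⟨F ζ, mem_image_of_mem F (Icc_subset_Ici_self hζ), le_rfl⟩)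
  obtain ⟨ζ', hζ', hle⟩ := hF.exists_mem_Icc_le hζ
  exact ⟨F ζ', mem_image_of_mem F hζ', hle⟩

theorem image_add_int (hF : IsDegOneLift F) (s : Set ℝ) (k : ℤ) :
    F '' ((· + (k : ℝ)) '' s) = (· + (k : ℝ)) '' (F '' s) := by
  simp only [image_image, hF.map_add_int]

theorem tailInf_add_int (hF : IsDegOneLift F) (x : ℝ) (k : ℤ) :
    tailInf F (x + k) = tailInf F x + k := by
  rw [tailInf, ← image_add_const_Ici, hF.image_add_int]
  exact ((OrderIso.addRight (k : ℝ)).map_csInf' (nonempty_Ici.image F)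
    (hF.bddBelow_image_Ici x)).symm

end IsDegOneLift

theorem continuous_tailInf {X : Type*} [TopologicalSpace X] {F : X → ℝ → ℝ}
    (hF : Continuous fun q : ℝ × X => F q.2 q.1) (hlift : ∀ p, IsDegOneLift (F p)) :
    Continuous fun q : ℝ × X => tailInf (F q.2) q.1 := by
  simp only [(hlift _).tailInf_eq_sInf_Icc]
  exact isCompact_Icc.continuous_sInf (f := fun (q : ℝ × X) (s : ℝ) => F q.2 (q.1 + s))
    (hF.comp (by fun_prop : Continuous fun r : (ℝ × X) × ℝ => (r.1.1 + r.2, r.1.2)))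

section SlidingMax

variable {G : ℝ → ℝ} {t t' ζ x : ℝ}

theorem slidingMax_zero (G : ℝ → ℝ) : slidingMax 0 G = G := by
  ext ζ
  rw [slidingMax, sub_zero, Icc_self, image_singleton, csSup_singleton]

theorem le_slidingMax (hG : Continuous G) (ht : 0 ≤ t) : G ζ ≤ slidingMax t G ζ :=
  le_csSup (hG.bddAbove_image_Icc _ _) (mem_image_of_mem G ⟨by linarith, le_rfl⟩)

theorem slidingMax_le_slidingMax (hG : Continuous G) (ht : 0 ≤ t) (htt' : t ≤ t') :
    slidingMax t G ζ ≤ slidingMax t' G ζ :=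
  csSup_le_csSup (hG.bddAbove_image_Icc _ _) ((nonempty_Icc.2 (by linarith)).image G)
    (image_mono (Icc_subset_Icc_left (by linarith)))

theorem slidingMax_le_max (hG : Continuous G) (ht : 0 ≤ t) (hζx : ζ ≤ x) :
    slidingMax t G x ≤ max (slidingMax t G ζ) (sSup (G '' Icc ζ x)) := by
  refine csSup_le ((nonempty_Icc.2 (by linarith)).image G) (forall_mem_image.2 fun u hu => ?_)
  rcases le_total u ζ with huζ | hζu
  · exact le_max_of_le_left
      (le_csSup (hG.bddAbove_image_Icc _ _) (mem_image_of_mem G ⟨by linarith [hu.1], huζ⟩))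
  · exact le_max_of_le_right
      (le_csSup (hG.bddAbove_image_Icc _ _) (mem_image_of_mem G ⟨hζu, hu.2⟩))

theorem slidingMax_eq_sSup_image_Icc_zero_one (ht : 0 ≤ t) :
    slidingMax t G ζ = sSup ((fun s => G (ζ - t + s * t)) '' Icc 0 1) := by
  rw [slidingMax, ← segment_eq_Icc (by linarith : ζ - t ≤ ζ), segment_eq_image', image_image]
  simp only [smul_eq_mul, sub_sub_cancel, mul_comm]

theorem continuous_slidingMax {X : Type*} [TopologicalSpace X] {G : X → ℝ → ℝ} {τ : X → ℝ}
    (hG : Continuous fun q : ℝ × X => G q.2 q.1) (hτ : Continuous τ) (hτ0 : ∀ p, 0 ≤ τ p) :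
    Continuous fun q : ℝ × X => slidingMax (τ q.2) (G q.2) q.1 := by
  simp only [slidingMax_eq_sSup_image_Icc_zero_one (hτ0 _)]
  exact isCompact_Icc.continuous_sSup
    (f := fun (q : ℝ × X) (s : ℝ) => G q.2 (q.1 - τ q.2 + s * τ q.2))
    (hG.comp (by fun_prop : Continuous fun r : (ℝ × X) × ℝ =>
      (r.1.1 - τ r.1.2 + r.2 * τ r.1.2, r.1.2)))

theorem isDegOneLift_slidingMax (hG : IsDegOneLift G) (ht : 0 ≤ t) :
    IsDegOneLift (slidingMax t G) where
  continuous :=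
    (isCompact_Icc.continuous_sSup (f := fun ζ s => G (ζ - t + s * t))
      (hG.continuous.comp (by fun_prop : Continuous fun r : ℝ × ℝ => r.1 - t + r.2 * t))).congr
      fun _ => (slidingMax_eq_sSup_image_Icc_zero_one ht).symm
  map_add_int ζ k := by
    rw [slidingMax, show ζ + k - t = ζ - t + k by ring, ← image_add_const_Icc, hG.image_add_int]
    exact ((OrderIso.addRight (k : ℝ)).map_csSup' ((nonempty_Icc.2 (by linarith)).image G)
      (hG.continuous.bddAbove_image_Icc _ _)).symm

theorem IsDegOneLift.isLUB_slidingMax_one (hG : IsDegOneLift G) (ζ : ℝ) :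
    IsLUB (G '' Iic ζ) (slidingMax 1 G ζ) := by
  refine ⟨forall_mem_image.2 fun u hu => ?_, fun b hb => ?_⟩
  · refine (hG.le_map_add_int u (k := ⌊ζ - u⌋) (Int.floor_nonneg.2 (sub_nonneg.2 hu))).trans
      (le_csSup (hG.continuous.bddAbove_image_Icc _ _) (mem_image_of_mem G ⟨?_, ?_⟩))
    · linarith [Int.lt_floor_add_one (ζ - u)]
    · linarith [Int.floor_le (ζ - u)]
  · exact csSup_le ((nonempty_Icc.2 (by linarith)).image G)
      fun _ hv => hb (image_mono Icc_subset_Iic_self hv)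

theorem IsDegOneLift.slidingMax_one (hG : IsDegOneLift G) (ζ : ℝ) :
    slidingMax 1 G ζ = sSup (G '' Iic ζ) :=
  ((hG.isLUB_slidingMax_one ζ).csSup_eq (nonempty_Iic.image G)).symm

theorem IsDegOneLift.monotone_slidingMax_one (hG : IsDegOneLift G) :
    Monotone (slidingMax 1 G) := fun ζ ζ' h =>
  (hG.isLUB_slidingMax_one ζ).2 fun _ hv =>
    (hG.isLUB_slidingMax_one ζ').1 (image_mono (Iic_subset_Iic.2 h) hv)

end SlidingMax

section Plateau

variable {F G : ℝ → ℝ} {t x : ℝ}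

theorem mem_plateauU_tailInf_of_lt (hF : IsDegOneLift F) (h : tailInf F x < F x) :
    x ∈ plateauU (tailInf F) := by
  obtain ⟨δ, hδ, hlt⟩ := exists_forall_Icc_of_eventually
    (continuousAt_const.eventually_lt hF.continuous.continuousAt h)
  refine ⟨δ, hδ, fun y hy => ?_⟩
  rcases le_total y x with hyx | hxy
  · exact tailInf_eq_of_forall_Icc hF.bddBelow_image_Ici hyx fun ζ hζ =>
      (hlt ζ ⟨hy.1.trans hζ.1, by linarith [hζ.2]⟩).le
  · obtain ⟨ζ, hζ, hmin⟩ :=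
      (isCompact_Icc.image hF.continuous).sInf_mem ((nonempty_Icc.2 hxy).image F)
    have hsplit := tailInf_eq_min (hF.bddBelow_image_Ici x) hxy
    have hζlt := hlt ζ ⟨by linarith [hζ.1], hζ.2.trans hy.2⟩
    rw [← hmin] at hsplit
    rcases min_choice (F ζ) (tailInf F y) with hm | hm <;> rw [hm] at hsplit
    · linarith
    · exact hsplit.symm

theorem mem_plateauU_tailInf_slidingMax_of_gt (hG : IsDegOneLift G) (ht : 0 ≤ t)
    (h : G x < tailInf (slidingMax t G) x) : x ∈ plateauU (tailInf (slidingMax t G)) := by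
  set F := slidingMax t G
  have hF : IsDegOneLift F := isDegOneLift_slidingMax hG ht
  obtain ⟨δ, hδ, hlt⟩ := exists_forall_Icc_of_eventually
    (hG.continuous.continuousAt.eventually_lt continuousAt_const h)
  have hsSup_lt : ∀ a b, x - δ ≤ a → a ≤ b → b ≤ x + δ →
      sSup (G '' Icc a b) < tailInf F x := by
    intro a b ha hab hb
    obtain ⟨u, hu, hmax⟩ :=
      (isCompact_Icc.image hG.continuous).sSup_mem ((nonempty_Icc.2 hab).image G)
    exact hmax ▸ hlt u ⟨ha.trans hu.1, hu.2.trans hb⟩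
  refine ⟨δ, hδ, fun y hy => ?_⟩
  rcases le_total y x with hyx | hxy
  · refine tailInf_eq_of_forall_Icc hF.bddBelow_image_Ici hyx fun ζ hζ => ?_
    have hFx := (tailInf_le (hF.bddBelow_image_Ici x) le_rfl).trans
      (slidingMax_le_max hG.continuous ht hζ.2)
    have hG_lt := hsSup_lt ζ x (hy.1.trans hζ.1) hζ.2 (by linarith)
    rcases le_max_iff.1 hFx with hle | hle
    · exact hle
    · linarith
  · refine le_antisymm ?_ (monotone_tailInf hF.bddBelow_image_Ici hxy)
    obtain ⟨ζ, hζ, hmin⟩ :=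
      (isCompact_Icc.image hF.continuous).sInf_mem ((nonempty_Icc.2 hxy).image F)
    have hsplit := tailInf_eq_min (hF.bddBelow_image_Ici x) hxy
    rw [← hmin] at hsplit
    rcases min_choice (F ζ) (tailInf F y) with hm | hm <;> rw [hm] at hsplit
    · calc tailInf F y ≤ F y := tailInf_le (hF.bddBelow_image_Ici y) le_rfl
        _ ≤ max (F ζ) (sSup (G '' Icc ζ y)) := slidingMax_le_max hG.continuous ht hζ.2
        _ ≤ tailInf F x := max_le hsplit.ge (hsSup_lt ζ y (by linarith [hζ.1]) hζ.2 hy.2).le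
    · exact hsplit.ge

theorem mem_plateauU_tailInf_slidingMax (hG : IsDegOneLift G) (ht : 0 ≤ t)
    (hne : tailInf (slidingMax t G) x ≠ G x) : x ∈ plateauU (tailInf (slidingMax t G)) := by
  rcases hne.lt_or_gt with hlt | hgt
  · exact mem_plateauU_tailInf_of_lt (isDegOneLift_slidingMax hG ht)
      (hlt.trans_le (le_slidingMax hG.continuous ht))
  · exact mem_plateauU_tailInf_slidingMax_of_gt hG ht hgt

end Plateau

theorem LiftSpace.isDegOneLift (G : LiftSpace) : IsDegOneLift (UniformFun.toFun G.1) :=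
  ⟨G.2.1, G.2.2⟩

theorem LiftSpace.continuous_tailInf_slidingMax :
    Continuous fun p : ℝ × Icc (0 : ℝ) 1 × LiftSpace =>
      tailInf (slidingMax p.2.1 (UniformFun.toFun p.2.2.1)) p.1 := by
  have hG : Continuous fun p : ℝ × Icc (0 : ℝ) 1 × LiftSpace => UniformFun.toFun p.2.2.1 p.1 :=
    UniformFun.continuous_uncurry_toFun (continuous_subtype_val.comp continuous_snd)
      fun q => q.2.2.1
  have hF : Continuous fun p : ℝ × Icc (0 : ℝ) 1 × LiftSpace =>
      slidingMax p.2.1 (UniformFun.toFun p.2.2.1) p.1 :=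
    continuous_slidingMax (G := fun q : Icc (0 : ℝ) 1 × LiftSpace => UniformFun.toFun q.2.1)
      (τ := fun q => q.1) hG continuous_fst.subtype_val fun q => q.1.2.1
  -- naming `F` explicitly avoids an expensive higher-order unification
  exact continuous_tailInf
    (F := fun q : Icc (0 : ℝ) 1 × LiftSpace => slidingMax q.1 (UniformFun.toFun q.2.1)) hF
    fun q => isDegOneLift_slidingMax q.2.isDegOneLift q.1.2.1

theorem stmt8 :
    ∃ H : ℝ → Set.Icc (0 : ℝ) 1 → LiftSpace → ℝ,
      -- continuity of `(x,t,G) ↦ G_t(x)` on `ℝ × [0,1] × E`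
      Continuous (fun p : ℝ × Set.Icc (0 : ℝ) 1 × LiftSpace => H p.1 p.2.1 p.2.2) ∧
      -- (i) `(G_t)` is a homotopy between `G⁻` and `G⁺`
      (∀ (G : LiftSpace) (x : ℝ),
        H x ⟨0, by norm_num⟩ G = sInf (UniformFun.toFun G.1 '' Set.Ici x) ∧
        H x ⟨1, by norm_num⟩ G = sSup (UniformFun.toFun G.1 '' Set.Iic x)) ∧
      -- (ii) each `G_t` is a plateau map, i.e. lies in `E_mon`
      (∀ (t : Set.Icc (0 : ℝ) 1) (G : LiftSpace),
        Continuous (fun x => H x t G) ∧ Monotone (fun x => H x t G) ∧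
        ∀ (x : ℝ) (k : ℤ), H (x + k) t G = H x t G + k) ∧
      -- (iii) `t ↦ G_t(x)` is monotonically increasing
      (∀ (x : ℝ) (G : LiftSpace), Monotone fun t : Set.Icc (0 : ℝ) 1 => H x t G) ∧
      -- (iv) if `G_t(x) ≠ G(x)` then `x ∈ U(G_t)`
      (∀ (x : ℝ) (t : Set.Icc (0 : ℝ) 1) (G : LiftSpace),
        H x t G ≠ UniformFun.toFun G.1 x → x ∈ plateauU fun y => H y t G) := by
  have hlift : ∀ (t : Icc (0 : ℝ) 1) (G : LiftSpace),
      IsDegOneLift (slidingMax t (UniformFun.toFun G.1)) :=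
    fun t G => isDegOneLift_slidingMax G.isDegOneLift t.2.1
  refine ⟨fun x t G => tailInf (slidingMax t (UniformFun.toFun G.1)) x,
    LiftSpace.continuous_tailInf_slidingMax, fun G x => ⟨?_, ?_⟩, fun t G => ⟨?_, ?_, ?_⟩,
    fun x G t t' htt' => ?_, fun x t G => mem_plateauU_tailInf_slidingMax G.isDegOneLift t.2.1⟩
  · simp only [slidingMax_zero]
    rfl
  · exact (tailInf_eq_of_monotone G.isDegOneLift.monotone_slidingMax_one).trans
      (G.isDegOneLift.slidingMax_one x)
  · exact LiftSpace.continuous_tailInf_slidingMax.comp (f := fun x : ℝ => (x, t, G)) (by fun_prop)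
  · exact monotone_tailInf (hlift t G).bddBelow_image_Ici
  · exact (hlift t G).tailInf_add_int
  · exact tailInf_le_tailInf ((hlift t G).bddBelow_image_Ici x)
      fun ζ => slidingMax_le_slidingMax G.isDegOneLift.continuous t.2.1 htt'
end

section
/- Suppose (G_n)_{n≥0} is a sequence of plateau maps (elements of E_mon) and let G^{(n)} := G_{n−1}∘⋯∘G_0 (with G^{(0)} the identity). Then there exists x ∈ ℝ such that G^{(n)}(x) ∉ U(G_n) for all n ≥ 0. -/
/-- The compositions `G^{(n)} = G_{n-1} ∘ ⋯ ∘ G_0` (with `G^{(0)} = id`). -/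
def compIter (G : ℕ → ℝ → ℝ) : ℕ → ℝ → ℝ
  | 0, x => x
  | n + 1, x => G n (compIter G n x)

lemma plateauU_isOpen (G : ℝ → ℝ) : IsOpen (plateauU G) := by
  rw [Metric.isOpen_iff]
  rintro x ⟨ε, hε, hx⟩
  refine ⟨ε / 2, by linarith, fun y hy => ?_⟩
  rw [Metric.mem_ball, Real.dist_eq] at hy
  obtain ⟨h1, h2⟩ := abs_lt.1 hy
  have hyx : G y = G x := hx y ⟨by linarith, by linarith⟩
  refine ⟨ε / 2, by linarith, fun z hz => ?_⟩
  have : G z = G x := hx z ⟨by simpa using by linarith [hz.1], by linarith [hz.2]⟩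
  rw [this, hyx]

lemma compIter_cont (G : ℕ → ℝ → ℝ) (hcont : ∀ n, Continuous (G n)) (n : ℕ) :
    Continuous (compIter G n) := by
  induction n with
  | zero => exact continuous_id
  | succ n ih => exact (hcont n).comp ih

lemma compIter_add_int (G : ℕ → ℝ → ℝ) (hper : ∀ n (x : ℝ) (k : ℤ), G n (x + k) = G n x + k)
    (n : ℕ) (x : ℝ) (k : ℤ) : compIter G n (x + k) = compIter G n x + k := by
  induction n with
  | zero => rfl
  | succ n ih => simp [compIter, ih, hper]

lemma plateauU_add_int (G : ℝ → ℝ) (hper : ∀ (x : ℝ) (k : ℤ), G (x + k) = G x + k)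
    (x : ℝ) (k : ℤ) (hx : x ∈ plateauU G) : x + k ∈ plateauU G := by
  obtain ⟨ε, hε, h⟩ := hx
  refine ⟨ε, hε, fun z hz => ?_⟩
  have hz' : z - k ∈ Set.Icc (x - ε) (x + ε) := ⟨by linarith [hz.1], by linarith [hz.2]⟩
  have : G z = G (z - k) + k := by rw [← hper (z - k) k]; ring_nf
  rw [this, h _ hz', hper]

lemma exists_leftmost (G : ℝ → ℝ) (hcont : Continuous G) (hmono : Monotone G)
    (hper : ∀ (x : ℝ) (k : ℤ), G (x + k) = G x + k) (y : ℝ) :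
    ∃ a, G a = y ∧ a ∉ plateauU G := by
  set S : Set ℝ := G ⁻¹' {y} with hS
  have hint : ∀ k : ℤ, G (k : ℝ) = G 0 + k := fun k => by
    have := hper 0 k; simpa using this
  have hne : S.Nonempty := by
    set t := y - G 0 with ht
    have h1 : G (⌊t⌋ : ℝ) ≤ y := by rw [hint]; have := Int.floor_le t; linarith
    have h2 : y ≤ G ((⌊t⌋ : ℝ) + 1) := by
      have : ((⌊t⌋ : ℝ) + 1) = ((⌊t⌋ + 1 : ℤ) : ℝ) := by push_cast; ring
      rw [this, hint]; push_cast
      have := Int.lt_floor_add_one t; linarith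
    obtain ⟨a, _, ha⟩ := intermediate_value_Icc (by linarith : (⌊t⌋ : ℝ) ≤ (⌊t⌋ : ℝ) + 1)
      hcont.continuousOn ⟨h1, h2⟩
    exact ⟨a, ha⟩
  have hbdd : BddBelow S := by
    refine ⟨y - G 0 - 1, fun x hx => ?_⟩
    have hx' : G x = y := hx
    have h1 : G x ≤ G (0 + (⌈x⌉ : ℝ)) := hmono (by simpa using Int.le_ceil x)
    rw [hper 0 ⌈x⌉] at h1
    have := Int.ceil_lt_add_one x
    have : (⌈x⌉ : ℝ) < x + 1 := this
    linarith
  have hcl : IsClosed S := isClosed_singleton.preimage hcont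
  refine ⟨sInf S, hcl.csInf_mem hne hbdd, ?_⟩
  rintro ⟨ε, hε, h⟩
  have hmem : sInf S - ε ∈ S := by
    have h1 : G (sInf S - ε) = G (sInf S) := h _ ⟨le_refl _, by linarith⟩
    have h2 : G (sInf S) = y := hcl.csInf_mem hne hbdd
    show G (sInf S - ε) = y
    rw [h1, h2]
  have := csInf_le hbdd hmem
  linarith

lemma compIter_shift (G : ℕ → ℝ → ℝ) (n : ℕ) (x : ℝ) :
    compIter G (n + 1) x = compIter (fun k => G (k + 1)) n (G 0 x) := by
  induction n with
  | zero => rfl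
  | succ n ih => show G (n+1) (compIter G (n+1) x) = _; rw [ih]; rfl

lemma exists_good (N : ℕ) : ∀ (G : ℕ → ℝ → ℝ), (∀ n, Continuous (G n)) →
    (∀ n, Monotone (G n)) → (∀ n (x : ℝ) (k : ℤ), G n (x + k) = G n x + k) →
    ∃ x : ℝ, ∀ n ≤ N, compIter G n x ∉ plateauU (G n) := by
  induction N with
  | zero =>
    intro G hcont hmono hper
    obtain ⟨a, _, ha⟩ := exists_leftmost (G 0) (hcont 0) (hmono 0) (hper 0) (G 0 0)
    exact ⟨a, fun n hn => by interval_cases n; exact ha⟩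
  | succ N ih =>
    intro G hcont hmono hper
    obtain ⟨x', hx'⟩ := ih (fun k => G (k + 1)) (fun k => hcont (k + 1))
      (fun k => hmono (k + 1)) (fun k => hper (k + 1))
    obtain ⟨a, haG, ha⟩ := exists_leftmost (G 0) (hcont 0) (hmono 0) (hper 0) x'
    refine ⟨a, fun n hn => ?_⟩
    match n with
    | 0 => exact ha
    | m + 1 =>
      rw [compIter_shift, haG]
      exact hx' m (by omega)

theorem stmt9 (G : ℕ → ℝ → ℝ)
    (hcont : ∀ n, Continuous (G n)) (hmono : ∀ n, Monotone (G n))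
    (hper : ∀ n (x : ℝ) (k : ℤ), G n (x + k) = G n x + k) :
    ∃ x : ℝ, ∀ n : ℕ, compIter G n x ∉ plateauU (G n) := by
  set F : ℕ → Set ℝ := fun n => compIter G n ⁻¹' (plateauU (G n))ᶜ with hF
  have hFcl : ∀ n, IsClosed (F n) :=
    fun n => (plateauU_isOpen (G n)).isClosed_compl.preimage (compIter_cont G hcont n)
  set T : ℕ → Set ℝ := fun N => Set.Icc (0:ℝ) 1 ∩ ⋂ n ∈ Set.Iic N, F n with hT
  have hTcl : ∀ N, IsClosed (T N) := fun N =>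
    isClosed_Icc.inter (isClosed_biInter fun n _ => hFcl n)
  have hTanti : ∀ N, T (N + 1) ⊆ T N := by
    intro N x hx
    exact ⟨hx.1, Set.mem_iInter₂.2 fun n hn =>
      Set.mem_iInter₂.1 hx.2 n (le_trans hn (Nat.le_succ N))⟩
  have hTne : ∀ N, (T N).Nonempty := by
    intro N
    obtain ⟨x, hx⟩ := exists_good N G hcont hmono hper
    refine ⟨x + (-⌊x⌋ : ℤ), ?_, Set.mem_iInter₂.2 fun n hn => ?_⟩
    · constructor
      · push_cast; linarith [Int.floor_le x]
      · push_cast; linarith [Int.lt_floor_add_one x]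
    · show compIter G n (x + _) ∉ plateauU (G n)
      rw [compIter_add_int G hper]
      intro hmem
      have : compIter G n x + (-⌊x⌋ : ℤ) + (⌊x⌋ : ℤ) ∈ plateauU (G n) :=
        plateauU_add_int (G n) (hper n) _ _ hmem
      have heq : compIter G n x + ((-⌊x⌋ : ℤ) : ℝ) + ((⌊x⌋ : ℤ) : ℝ) = compIter G n x := by
        push_cast; ring
      rw [heq] at this
      exact hx n (Set.mem_Iic.1 hn) this
  obtain ⟨x, hx⟩ := IsCompact.nonempty_iInter_of_sequence_nonempty_isCompact_isClosed T
    hTanti hTne (isCompact_Icc.inter_right (isClosed_biInter fun n _ => hFcl n)) hTcl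
  refine ⟨x, fun n => ?_⟩
  have := Set.mem_iInter.1 hx n
  exact Set.mem_iInter₂.1 this.2 n (le_refl n)
end

section
/- Let Θ be a compact metric space, r:Θ→Θ uniquely ergodic, and let f be a UEF monotone circle map (not necessarily homotopic to the identity). Then h_top(f) = h_top(r). In particular, if f is a QPF monotone circle map (Θ=T¹ and r an irrational rotation), then h_top(f) = 0. -/
open Filter MeasureTheory Topology

attribute [local instance] ZeroLEOneClass.factZeroLtOne

/-!
The inequality `h_top(r) ≤ h_top(f)` holds because `r` is a factor of `f` through the projection.
For the converse, a continuous map `H` of the circle preserving the cyclic order has a monotone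
lift `g : [0, 1) → [0, 2)`, so for finitely many such maps `H₁, …, H_M` the floor codes
`⌊L gᵢ⌋` are monotone along `[0, 1)`; the code vectors form a chain and are determined by their
sum, so `2LM + 1` points approximate every orbit segment of length `M` of the fibre maps up to
`1 / L`. Cutting an orbit of length `Mk` into `k` blocks of length `M`, and re-anchoring each block
on the orbit of a centre of a dynamical cover of the base, gives
`N_f(ε, Mk) ≤ N_r(δ, Mk) · (2LM + 1)^k`, whence `h_top(f) ≤ h_top(r) + log (2LM + 1) / M`
for every `M`.
-/

open Set Function

theorem exists_finset_card_le_of_forall_mem {X Y : Type*} (code : X → Y) (K : Finset Y)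
    (hK : ∀ x, code x ∈ K) : ∃ S : Finset X, S.card ≤ K.card ∧ ∀ x, ∃ s ∈ S, code s = code x := by
  classical
  rcases isEmpty_or_nonempty X with hX | hX
  · exact ⟨∅, by simp, fun x => isEmptyElim x⟩
  exact ⟨K.image (invFun code), Finset.card_image_le,
    fun x => ⟨_, Finset.mem_image_of_mem _ (hK x), invFun_eq ⟨x, rfl⟩⟩⟩

theorem eq_of_sum_eq_of_monotoneOn {α ι M : Type*} [LinearOrder α] [Fintype ι]
    [AddCommMonoid M] [PartialOrder M] [IsOrderedCancelAddMonoid M] {s : Set α}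
    {Φ : ι → α → M} (hΦ : ∀ i, MonotoneOn (Φ i) s) {a b : α} (ha : a ∈ s) (hb : b ∈ s)
    (h : ∑ i, Φ i a = ∑ i, Φ i b) (i : ι) : Φ i a = Φ i b := by
  rcases le_total a b with hab | hba
  · exact (Finset.sum_eq_sum_iff_of_le fun i _ => hΦ i ha hb hab).1 h i (Finset.mem_univ i)
  · exact ((Finset.sum_eq_sum_iff_of_le fun i _ => hΦ i hb ha hba).1 h.symm i
      (Finset.mem_univ i)).symm

theorem exists_pos_forall_dist_iterate_lt {X : Type*} [PseudoMetricSpace X] [CompactSpace X]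
    {T : X → X} (hT : Continuous T) (M : ℕ) {ε : ℝ} (hε : 0 < ε) :
    ∃ δ > 0, ∀ i < M, ∀ x y, dist x y < δ → dist (T^[i] x) (T^[i] y) < ε := by
  have hF : UniformContinuous fun x (i : Fin M) => T^[i] x :=
    CompactSpace.uniformContinuous_of_continuous (continuous_pi fun i => hT.iterate i)
  obtain ⟨δ, hδ, h⟩ := Metric.uniformContinuous_iff.1 hF ε hε
  exact ⟨δ, hδ, fun i hi x y hxy => (dist_le_pi_dist _ _ ⟨i, hi⟩).trans_lt (h hxy)⟩

theorem EReal.le_of_forall_natCast_mul_le_mul_add {x y : EReal} {c : ℕ → ℝ}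
    (hc : Tendsto (fun n => c n / n) atTop (𝓝 0))
    (h : ∀ n : ℕ, n ≠ 0 → (n : EReal) * x ≤ n * y + c n) : x ≤ y := by
  have hlim : Tendsto (fun n : ℕ => y + ((c n / n : ℝ) : EReal)) atTop (𝓝 y) := by
    have := (EReal.continuousAt_add (p := (y, 0)) (.inr EReal.zero_ne_bot)
      (.inr EReal.zero_ne_top)).tendsto.comp
        (tendsto_const_nhds.prodMk_nhds (continuous_coe_real_ereal.tendsto' 0 0 rfl |>.comp hc))
    rwa [add_zero] at this
  refine ge_of_tendsto hlim ((eventually_ne_atTop 0).mono fun n hn => ?_)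
  have hn₀ : (n : EReal) ≠ 0 := by exact_mod_cast hn
  calc x = n * x / n := by
        rw [← EReal.mul_div, EReal.mul_div_cancel (EReal.natCast_ne_bot n)
          (EReal.natCast_ne_top n) hn₀]
    _ ≤ (n * y + c n) / n := EReal.div_le_div_right_of_nonneg (Nat.cast_nonneg' n) (h n hn)
    _ = y + ((c n / n : ℝ) : EReal) := by
        rw [EReal.add_div_of_nonneg_right (Nat.cast_nonneg' n), ← EReal.mul_div,
          EReal.mul_div_cancel (EReal.natCast_ne_bot n) (EReal.natCast_ne_top n) hn₀,
          EReal.coe_div, EReal.coe_natCast]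

theorem tendsto_log_two_mul_mul_add_one_div {L : ℕ} (hL : 0 < L) :
    Tendsto (fun M : ℕ => Real.log (2 * L * M + 1) / M) atTop (𝓝 0) := by
  have hL' : (0 : ℝ) < L := Nat.cast_pos.2 hL
  have hx : Tendsto (fun M : ℕ => (2 * L * M + 1 : ℝ)) atTop atTop :=
    tendsto_atTop_add_const_right _ _
      (tendsto_natCast_atTop_atTop.const_mul_atTop (by positivity))
  refine ((Real.tendsto_pow_log_div_mul_add_atTop (1 / (2 * L)) (-1 / (2 * L)) 1
    (by positivity)).comp hx).congr fun M => ?_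
  simp only [comp_apply, pow_one]
  congr 1
  field_simp
  ring

namespace UnitAddCircle

noncomputable def toIco (x : UnitAddCircle) : ℝ := AddCircle.equivIco 1 0 x

lemma toIco_mem (x : UnitAddCircle) : toIco x ∈ Ico (0 : ℝ) 1 := by
  simpa [toIco] using (AddCircle.equivIco 1 0 x).2

@[simp]
lemma coe_toIco (x : UnitAddCircle) : ((toIco x : ℝ) : UnitAddCircle) = x :=
  (AddCircle.equivIco 1 0).symm_apply_apply x

lemma dist_coe_le (u v : ℝ) : dist (u : UnitAddCircle) v ≤ |u - v| := by
  rw [dist_eq_norm, ← AddCircle.coe_sub, ← Real.norm_eq_abs]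
  exact QuotientAddGroup.norm_mk_le_norm

lemma btw_coe_of_le {u v w : ℝ} (huv : u ≤ v) (hvw : v ≤ w) (hw : w < u + 1) :
    btw (u : UnitAddCircle) v w := by
  rw [QuotientAddGroup.btw_coe_iff, (toIcoMod_eq_self _).2 ⟨huv, by linarith⟩]
  calc v ≤ w := hvw
    _ = toIcoMod _ u w := ((toIcoMod_eq_self _).2 ⟨huv.trans hvw, hw⟩).symm
    _ ≤ toIocMod _ u w := toIcoMod_le_toIocMod _ _ _

lemma le_and_le_of_btw_coe {u v w : ℝ} (hv : 0 ≤ v) (hvu : v < u) (hu : u < 1)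
    (hw : w ∈ Ico (0 : ℝ) 1) (h : btw (u : UnitAddCircle) v w) : v ≤ w ∧ w ≤ u := by
  rw [QuotientAddGroup.btw_coe_iff, ← toIcoMod_add_right,
    (toIcoMod_eq_self _).2 ⟨by linarith, by linarith⟩] at h
  rcases le_or_gt w u with hwu | huw
  · rw [← toIocMod_add_right, (toIocMod_eq_self _).2 ⟨by linarith [hw.1], by linarith⟩] at h
    exact ⟨by linarith, hwu⟩
  · rw [(toIocMod_eq_self _).2 ⟨huw, by linarith [hw.2]⟩] at h
    linarith [hw.2]

variable {H : UnitAddCircle → UnitAddCircle}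

lemma toIco_le_toIco_of_descent (hH : Continuous H)
    (hbtw : ∀ a b c, btw a b c → btw (H a) (H b) (H c)) {z w x y : ℝ} (hz : 0 ≤ z)
    (hzw : z ≤ w) (hwx : w ≤ x) (hxy : x ≤ y) (hy : y < 1)
    (hdesc : toIco (H w) < toIco (H z)) : toIco (H x) ≤ toIco (H y) := by
  by_contra! hdesc'
  have hbtw' {u v w : ℝ} (hu : 0 ≤ u) (huv : u ≤ v) (hvw : v ≤ w) (hw : w < 1) :
      btw (H u) (H v) (H w) :=
    hbtw _ _ _ (btw_coe_of_le huv hvw (by linarith))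
  have hwy := le_and_le_of_btw_coe (toIco_mem _).1 hdesc (toIco_mem _).2 (toIco_mem _)
    (by simpa using hbtw' hz hzw (hwx.trans hxy) hy)
  have hyw := le_and_le_of_btw_coe (toIco_mem _).1 hdesc' (toIco_mem _).2 (toIco_mem _)
    (by simpa using btw_cyclic_left (hbtw' (hz.trans hzw) hwx hxy hy))
  have hHy : H y = H w := by
    rw [← coe_toIco (H y), ← coe_toIco (H w), le_antisymm hyw.1 hwy.1]
  -- on `[x, y]`, `H` is trapped between the two arcs from `H z` to `H w`, which only meet at
  -- their endpoints
  have hvals : MapsTo (fun t : ℝ => H t) (Icc x y) {H z, H w} := by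
    rintro u ⟨hxu, huy⟩
    have h₁ := hbtw' hz hzw (hwx.trans hxu) (huy.trans_lt hy)
    have h₂ := hHy ▸ hbtw' hz (hzw.trans (hwx.trans hxu)) huy hy
    rcases btw_antisymm h₁ (btw_cyclic_left h₂) with h | h | h
    · exact absurd (congrArg toIco h) hdesc.ne'
    · simp [h]
    · simp [h]
  have hHxy := isPreconnected_Icc.constant_of_mapsTo (toFinite _).isDiscrete
    (hH.comp (AddCircle.continuous_mk' 1)).continuousOn hvals (left_mem_Icc.2 hxy)
    (right_mem_Icc.2 hxy)
  exact hdesc'.ne (congrArg toIco hHxy).symm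

theorem exists_monotoneOn_lift (hH : Continuous H)
    (hbtw : ∀ a b c, btw a b c → btw (H a) (H b) (H c)) :
    ∃ g : ℝ → ℝ, MonotoneOn g (Ico 0 1) ∧
      ∀ t ∈ Ico (0 : ℝ) 1, g t ∈ Ico (0 : ℝ) 2 ∧ (g t : UnitAddCircle) = H t := by
  -- `g` adds `1` to `toIco ∘ H` after its first descent; there is no second one
  set D := {t : ℝ | ∃ z w, 0 ≤ z ∧ z ≤ w ∧ w ≤ t ∧ toIco (H w) < toIco (H z)}
  classical
  refine ⟨fun t => toIco (H t) + if t ∈ D then 1 else 0, ?_, fun t _ => ?_⟩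
  · intro s hs t ht hst
    have hs' := toIco_mem (H s)
    have ht' := toIco_mem (H t)
    by_cases hsD : s ∈ D
    · obtain ⟨z, w, hz, hzw, hws, hdesc⟩ := id hsD
      have htD : t ∈ D := ⟨z, w, hz, hzw, hws.trans hst, hdesc⟩
      simp only [if_pos hsD, if_pos htD]
      linarith [toIco_le_toIco_of_descent hH hbtw hz hzw hws hst ht.2 hdesc]
    · by_cases htD : t ∈ D
      · simp only [if_neg hsD, if_pos htD]
        linarith [hs'.2, ht'.1]
      · have : toIco (H s) ≤ toIco (H t) := by
          by_contra! h
          exact htD ⟨s, t, hs.1, hst, le_rfl, h⟩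
        simpa [hsD, htD] using this
  · have ht' := toIco_mem (H t)
    dsimp only
    split_ifs <;> exact ⟨⟨by linarith [ht'.1], by linarith [ht'.2]⟩, by simp⟩

theorem exists_finset_forall_dist_lt {ι : Type*} [Fintype ι]
    {H : ι → UnitAddCircle → UnitAddCircle} (hH : ∀ i, Continuous (H i))
    (hbtw : ∀ i a b c, btw a b c → btw (H i a) (H i b) (H i c)) {L : ℕ} (hL : 0 < L) :
    ∃ S : Finset UnitAddCircle, S.card ≤ 2 * L * Fintype.card ι + 1 ∧
      ∀ x, ∃ s ∈ S, ∀ i, dist (H i x) (H i s) < 1 / L := by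
  choose g hg_mono hg using fun i => exists_monotoneOn_lift (hH i) (hbtw i)
  have hlift (i : ι) (x : UnitAddCircle) : (g i (toIco x) : UnitAddCircle) = H i x := by
    simpa using (hg i _ (toIco_mem x)).2
  have hL' : (0 : ℝ) < L := Nat.cast_pos.2 hL
  set Φ : ι → ℝ → ℤ := fun i t => ⌊L * g i t⌋
  have hΦ_mono (i : ι) : MonotoneOn (Φ i) (Ico 0 1) := fun s hs t ht hst =>
    Int.floor_mono (mul_le_mul_of_nonneg_left (hg_mono i hs ht hst) hL'.le)
  have hΦ_mem (i : ι) (x : UnitAddCircle) : Φ i (toIco x) ∈ Icc (0 : ℤ) (2 * L) := by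
    obtain ⟨h0, h2⟩ := (hg i _ (toIco_mem x)).1
    exact ⟨Int.floor_nonneg.2 (by positivity), (Int.floor_lt.2 (by push_cast; nlinarith)).le⟩
  obtain ⟨S, hS, hcode⟩ := exists_finset_card_le_of_forall_mem
    (fun x => ∑ i, Φ i (toIco x)) (Finset.Icc 0 (2 * L * Fintype.card ι)) fun x =>
      Finset.mem_Icc.2 ⟨Finset.sum_nonneg fun i _ => (hΦ_mem i x).1,
        (Finset.sum_le_card_nsmul _ _ _ fun i _ => (hΦ_mem i x).2).trans_eq (by
          rw [Finset.card_univ, nsmul_eq_mul]; ring)⟩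
  refine ⟨S, hS.trans (by simp), fun x => ?_⟩
  obtain ⟨s, hs, hsx⟩ := hcode x
  refine ⟨s, hs, fun i => ?_⟩
  have hfloor := eq_of_sum_eq_of_monotoneOn hΦ_mono (toIco_mem x) (toIco_mem s) hsx.symm i
  have hclose := Int.abs_sub_lt_one_of_floor_eq_floor hfloor
  rw [← mul_sub, abs_mul, abs_of_pos hL'] at hclose
  rw [← hlift i x, ← hlift i s]
  calc _ ≤ |g i (toIco x) - g i (toIco s)| := dist_coe_le _ _
    _ < 1 / L := by rw [lt_div_iff₀ hL']; linarith

end UnitAddCircle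

namespace SkewProduct

open Dynamics ExpGrowth
open scoped ENNReal

variable {Θ : Type*} {r : Θ → Θ} {f : Θ × UnitAddCircle → Θ × UnitAddCircle}

theorem btw_snd_iterate (hskew : Semiconj Prod.fst f r)
    (hmono : ∀ θ a b c, btw a b c → btw (f (θ, a)).2 (f (θ, b)).2 (f (θ, c)).2) (n : ℕ)
    (θ : Θ) {a b c : UnitAddCircle} (h : btw a b c) :
    btw (f^[n] (θ, a)).2 (f^[n] (θ, b)).2 (f^[n] (θ, c)).2 := by
  induction n generalizing θ a b c with
  | zero => exact h
  | succ n ih =>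
    have hf (x : UnitAddCircle) : f (θ, x) = (r θ, (f (θ, x)).2) := Prod.ext (hskew _) rfl
    rw [iterate_succ_apply, iterate_succ_apply, iterate_succ_apply, hf a, hf b, hf c]
    exact ih _ (hmono θ a b c h)

variable [PseudoMetricSpace Θ]

theorem dist_iterate_mk (hskew : Semiconj Prod.fst f r) (n : ℕ) (θ : Θ) (a b : UnitAddCircle) :
    dist (f^[n] (θ, a)) (f^[n] (θ, b)) = dist (f^[n] (θ, a)).2 (f^[n] (θ, b)).2 := by
  rw [Prod.dist_eq, hskew.iterate_right n, hskew.iterate_right n, dist_self,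
    max_eq_right dist_nonneg]

theorem exists_finset_forall_dist_iterate_lt (hf : Continuous f) (hskew : Semiconj Prod.fst f r)
    (hmono : ∀ θ a b c, btw a b c → btw (f (θ, a)).2 (f (θ, b)).2 (f (θ, c)).2)
    (θ : Θ) (M : ℕ) {L : ℕ} (hL : 0 < L) :
    ∃ S : Finset UnitAddCircle, S.card ≤ 2 * L * M + 1 ∧
      ∀ a, ∃ s ∈ S, ∀ i < M, dist (f^[i] (θ, a)) (f^[i] (θ, s)) < 1 / L := by
  obtain ⟨S, hS, hcover⟩ := UnitAddCircle.exists_finset_forall_dist_lt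
    (H := fun (i : Fin M) a => (f^[i] (θ, a)).2)
    (fun i => continuous_snd.comp ((hf.iterate i).comp (Continuous.prodMk_right θ)))
    (fun i _ _ _ => btw_snd_iterate hskew hmono i θ) hL
  refine ⟨S, by simpa using hS, fun a => ?_⟩
  obtain ⟨s, hs, h⟩ := hcover a
  exact ⟨s, hs, fun i hi => (dist_iterate_mk hskew i θ a s).trans_lt (h ⟨i, hi⟩)⟩

theorem dist_iterate_add_lt (hskew : Semiconj Prod.fst f r) {M L : ℕ} {ε δ : ℝ}
    (hLε : 1 / (L : ℝ) ≤ ε / 4)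
    (hδ : ∀ i < M, ∀ p q, dist p q < δ → dist (f^[i] p) (f^[i] q) < ε / 4)
    {p : Θ × UnitAddCircle} {z : Θ} {a : UnitAddCircle} {i j : ℕ} (hi : i < M)
    (hz : dist (r^[j] p.1) (r^[j] z) < δ)
    (ha : dist (f^[i] (r^[j] z, (f^[j] p).2)) (f^[i] (r^[j] z, a)) < 1 / L) :
    dist (f^[i + j] p) (f^[i] (r^[j] z, a)) < ε / 2 := by
  have hp : dist (f^[j] p) (r^[j] z, (f^[j] p).2) < δ := by
    rwa [Prod.dist_eq, hskew.iterate_right j, dist_self, max_eq_left dist_nonneg]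
  rw [iterate_add_apply]
  calc _ ≤ _ := dist_triangle _ (f^[i] (r^[j] z, (f^[j] p).2)) _
    _ < ε / 4 + 1 / L := add_lt_add (hδ i hi _ _ hp) ha
    _ ≤ ε / 2 := by linarith

theorem coverMincard_mul_le (hf : Continuous f) (hskew : Semiconj Prod.fst f r)
    (hmono : ∀ θ a b c, btw a b c → btw (f (θ, a)).2 (f (θ, b)).2 (f (θ, c)).2)
    {ε δ : ℝ} {L M k : ℕ} (hL : 0 < L) (hLε : 1 / (L : ℝ) ≤ ε / 4)
    (hδ : ∀ i < M, ∀ p q, dist p q < δ → dist (f^[i] p) (f^[i] q) < ε / 4) {Y : Finset Θ}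
    (hY : IsDynCoverOf r univ {q | dist q.1 q.2 < δ} (M * k) Y) :
    coverMincard f univ {p | dist p.1 p.2 < ε} (M * k) ≤ Y.card * (2 * L * M + 1) ^ k := by
  classical
  choose z hzY hz using fun θ => hY (mem_univ θ)
  choose S hS s hsS hs using fun θ => exists_finset_forall_dist_iterate_lt hf hskew hmono θ M hL
  let code (p : Θ × UnitAddCircle) : Θ × (Fin k → UnitAddCircle) :=
    (z p.1, fun j => s (r^[M * j] (z p.1)) (f^[M * j] p).2)
  let K := Y.biUnion fun y => (Fintype.piFinset fun j : Fin k => S (r^[M * j] y)).image (y, ·)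
  have hK (p : Θ × UnitAddCircle) : code p ∈ K :=
    Finset.mem_biUnion.2 ⟨z p.1, hzY _, Finset.mem_image_of_mem _
      (Fintype.mem_piFinset.2 fun j => hsS _ _)⟩
  have hKcard : K.card ≤ Y.card * (2 * L * M + 1) ^ k := by
    refine Finset.card_biUnion_le_card_mul _ _ _ fun y _ => Finset.card_image_le.trans ?_
    rw [Fintype.card_piFinset]
    exact (Finset.prod_le_pow_card _ _ _ fun j _ => hS _).trans_eq (by simp)
  have hshadow (p : Θ × UnitAddCircle) {t : ℕ} (ht : t < M * k) :
      dist (f^[t] p) (f^[t % M] (r^[M * (t / M)] (z p.1),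
        s (r^[M * (t / M)] (z p.1)) (f^[M * (t / M)] p).2)) < ε / 2 := by
    have hM : 0 < M := Nat.pos_of_ne_zero (by rintro rfl; simp at ht)
    have hj : M * (t / M) < M * k := (Nat.mul_div_le t M).trans_lt ht
    have := dist_iterate_add_lt hskew hLε hδ (Nat.mod_lt t hM)
      (mem_dynEntourage.1 (hz p.1) _ hj) (hs _ _ _ (Nat.mod_lt t hM))
    rwa [Nat.mod_add_div] at this
  obtain ⟨C, hC, hcode⟩ := exists_finset_card_le_of_forall_mem code K hK
  refine (IsDynCoverOf.coverMincard_le_card (s := C) fun p _ => ?_).trans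
    (by exact_mod_cast hC.trans hKcard)
  obtain ⟨c, hc, hcp⟩ := hcode p
  refine ⟨c, hc, mem_dynEntourage.2 fun t ht => ?_⟩
  have hjk : t / M < k := Nat.div_lt_of_lt_mul ht
  have hzc : z c.1 = z p.1 := congrArg Prod.fst hcp
  have hsc := congrFun (congrArg Prod.snd hcp) ⟨t / M, hjk⟩
  simp only [code, hzc] at hsc
  have h₁ := hshadow p ht
  have h₂ := hshadow c ht
  rw [hzc, hsc] at h₂
  calc dist (f^[t] p) (f^[t] c) ≤ _ := dist_triangle_right _ _ _
    _ < ε / 2 + ε / 2 := add_lt_add h₁ h₂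
    _ = ε := add_halves ε

variable [CompactSpace Θ]

theorem exists_coverMincard_mul_le (hf : Continuous f) (hskew : Semiconj Prod.fst f r)
    (hmono : ∀ θ a b c, btw a b c → btw (f (θ, a)).2 (f (θ, b)).2 (f (θ, c)).2)
    {ε : ℝ} (hε : 0 < ε) {L : ℕ} (hL : 0 < L) (hLε : 1 / (L : ℝ) ≤ ε / 4) (M : ℕ) :
    ∃ δ > 0, ∀ k, coverMincard f univ {p | dist p.1 p.2 < ε} (M * k) ≤
      coverMincard r univ {q | dist q.1 q.2 < δ} (M * k) * (2 * L * M + 1) ^ k := by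
  obtain ⟨δ, hδ, hδε⟩ := exists_pos_forall_dist_iterate_lt hf M (by positivity : 0 < ε / 4)
  refine ⟨δ, hδ, fun k => ?_⟩
  rcases eq_top_or_lt_top (coverMincard r univ {q | dist q.1 q.2 < δ} (M * k)) with h | h
  · rw [h, ENat.top_mul (by positivity)]
    exact le_top
  · obtain ⟨Y, hY, hYcard⟩ := (coverMincard_finite_iff _ _ _ _).1 h
    rw [← hYcard]
    exact_mod_cast coverMincard_mul_le hf hskew hmono hL hLε hδε hY

theorem natCast_mul_coverEntropyEntourage_le (hf : Continuous f)
    (hskew : Semiconj Prod.fst f r)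
    (hmono : ∀ θ a b c, btw a b c → btw (f (θ, a)).2 (f (θ, b)).2 (f (θ, c)).2)
    {ε : ℝ} (hε : 0 < ε) {L : ℕ} (hL : 0 < L) (hLε : 1 / (L : ℝ) ≤ ε / 4) {M : ℕ} (hM : M ≠ 0) :
    (M : EReal) * coverEntropyEntourage f univ {p | dist p.1 p.2 < ε} ≤
      M * coverEntropy r univ + Real.log (2 * L * M + 1) := by
  obtain ⟨δ, hδ, hbound⟩ := exists_coverMincard_mul_le hf hskew hmono hε hL hLε M
  set U : SetRel (Θ × UnitAddCircle) (Θ × UnitAddCircle) := {p | dist p.1 p.2 < ε}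
  set V : SetRel Θ Θ := {q | dist q.1 q.2 < δ}
  have hU : Monotone fun n => (coverMincard f univ U n : ℝ≥0∞) :=
    fun _ _ h => ENat.toENNReal_mono (coverMincard_monotone_time _ _ _ h)
  have hV : Monotone fun n => (coverMincard r univ V n : ℝ≥0∞) :=
    fun _ _ h => ENat.toENNReal_mono (coverMincard_monotone_time _ _ _ h)
  have hP : ENNReal.log ((2 * L * M + 1 : ℕ) : ℝ≥0∞) = Real.log (2 * L * M + 1) := by
    rw [ENNReal.log_pos_real (Nat.cast_ne_zero.2 (Nat.succ_ne_zero _))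
      (ENNReal.natCast_ne_top _), ENNReal.toReal_natCast]
    push_cast
    rfl
  have key : expGrowthSup (fun k => (coverMincard f univ U (M * k) : ℝ≥0∞)) ≤
      expGrowthSup (fun k => (coverMincard r univ V (M * k) : ℝ≥0∞)) +
        expGrowthSup (fun k => ((2 * L * M + 1 : ℕ) : ℝ≥0∞) ^ k) := by
    refine (expGrowthSup_monotone fun k => ?_).trans (expGrowthSup_mul_le (.inr ?_) (.inr ?_))
    · simpa using ENat.toENNReal_mono (hbound k)
    · rw [expGrowthSup_pow, hP]
      exact EReal.coe_ne_top _
    · rw [expGrowthSup_pow, hP]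
      exact EReal.coe_ne_bot _
  rw [coverEntropyEntourage, ← hU.expGrowthSup_comp_mul hM]
  refine key.trans ?_
  rw [hV.expGrowthSup_comp_mul hM, expGrowthSup_pow, hP]
  gcongr
  exact coverEntropyEntourage_le_coverEntropy r univ (Metric.dist_mem_uniformity hδ)

theorem coverEntropy_le (hf : Continuous f) (hskew : Semiconj Prod.fst f r)
    (hmono : ∀ θ a b c, btw a b c → btw (f (θ, a)).2 (f (θ, b)).2 (f (θ, c)).2) :
    coverEntropy f univ ≤ coverEntropy r univ := by
  rw [coverEntropy_eq_iSup_basis Metric.uniformity_basis_dist]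
  refine iSup₂_le fun ε hε => ?_
  obtain ⟨L, hL⟩ := exists_nat_gt (4 / ε)
  have hL₀ : 0 < L := Nat.cast_pos.1 ((by positivity : (0 : ℝ) < 4 / ε).trans hL)
  have hLε : 1 / (L : ℝ) ≤ ε / 4 := by
    rw [div_lt_iff₀ hε] at hL
    rw [div_le_div_iff₀ (Nat.cast_pos.2 hL₀) (by norm_num)]
    linarith
  exact EReal.le_of_forall_natCast_mul_le_mul_add (tendsto_log_two_mul_mul_add_one_div hL₀)
    fun M hM => natCast_mul_coverEntropyEntourage_le hf hskew hmono hε hL₀ hLε hM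

end SkewProduct

theorem stmt11_general {Θ : Type*} [MetricSpace Θ] [CompactSpace Θ]
    (r : Θ → Θ)
    (f : Θ × AddCircle (1 : ℝ) → Θ × AddCircle (1 : ℝ)) (hf : Continuous f)
    (hskew : ∀ p : Θ × AddCircle (1 : ℝ), (f p).1 = r p.1)
    -- every fibre map preserves the cyclic order of the circle
    (hmono : ∀ (θ : Θ) (a b c : AddCircle (1 : ℝ)), Btw.btw a b c →
      Btw.btw (f (θ, a)).2 (f (θ, b)).2 (f (θ, c)).2) :
    Dynamics.coverEntropy f Set.univ = Dynamics.coverEntropy r Set.univ :=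
  le_antisymm (SkewProduct.coverEntropy_le hf hskew hmono) <| by
    simpa using
      Dynamics.coverEntropy_image_le_of_uniformContinuous hskew uniformContinuous_fst univ

theorem stmt11 {Θ : Type*} [MetricSpace Θ] [CompactSpace Θ] [MeasurableSpace Θ] [BorelSpace Θ]
    (r : Θ → Θ) (hr : Continuous r)
    (hUE : ∃! μ : Measure Θ, IsProbabilityMeasure μ ∧ μ.map r = μ)
    (f : Θ × AddCircle (1 : ℝ) → Θ × AddCircle (1 : ℝ)) (hf : Continuous f)
    (hskew : ∀ p : Θ × AddCircle (1 : ℝ), (f p).1 = r p.1)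
    -- every fibre map preserves the cyclic order of the circle
    (hmono : ∀ (θ : Θ) (a b c : AddCircle (1 : ℝ)), Btw.btw a b c →
      Btw.btw (f (θ, a)).2 (f (θ, b)).2 (f (θ, c)).2) :
    Dynamics.coverEntropy f Set.univ = Dynamics.coverEntropy r Set.univ :=
  stmt11_general r f hf hskew hmono
end

section
/- Let Θ be a compact metric space, r:Θ→Θ continuous, and let f:Θ×T¹→Θ×T¹, f(θ,φ)=(r(θ),f_θ(φ)), be a continuous skew product all of whose fibre maps preserve the cyclic order of T¹ (a forced monotone circle map). Then for every θ₀ ∈ Θ the Bowen topological entropy of the fibre {θ₀}×T¹ is zero: h_top(f, {θ₀}×T¹) = 0. Indeed, for every ε > 0 the minimal number R(f,{θ₀}×T¹,n,ε) of (f,n,ε)-balls needed to cover {θ₀}×T¹ grows at most linearly in n. -/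
/-!
For each `n`, the fibre maps `g i = (f^[i] (θ₀, ·)).2`, `i < n`, are continuous and preserve the
cyclic order, so each has a lift `φ i : [0, 1) → [0, 1]` that is monotone: once such a map has
wound around the circle back to its starting value it can only stay there. The sum
`Φ = ∑ i < n, φ i` is monotone with values in `[0, n]` and dominates every `|φ i x - φ i y|`, so
points of the fibre whose `Φ`-values lie in a common interval of length `ε` are `(n, ε)`-close.
Hence `⌊n / ε⌋ + 1` dynamical balls cover the fibre, and linear growth means zero entropy.
-/

open Filter Topology Set

theorem Real.fact_zero_lt_one : Fact ((0 : ℝ) < 1) :=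
  ⟨zero_lt_one⟩

attribute [local instance] Real.fact_zero_lt_one

namespace ExpGrowth
open scoped ENNReal

lemma expGrowthSup_natCast_add_one : expGrowthSup (fun n : ℕ ↦ (n + 1 : ℝ≥0∞)) = 0 := by
  have hlog : Tendsto (fun n : ℕ ↦ Real.log (n + 1) / n) atTop (𝓝 0) := by
    have h := (Real.tendsto_pow_log_div_mul_add_atTop 1 (-1) 1 one_ne_zero).comp
      (tendsto_atTop_add_const_right _ 1 tendsto_natCast_atTop_atTop)
    refine h.congr fun n ↦ ?_
    simp
  refine Tendsto.limsup_eq ((EReal.tendsto_coe.2 hlog).congr fun n ↦ ?_)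
  rw [EReal.coe_div, ← ENNReal.log_ofReal_of_pos (by positivity)]
  norm_cast

end ExpGrowth

namespace Dynamics

variable {X : Type*} {T : X → X} {F : Set X}

lemma coverEntropyEntourage_le_zero_of_coverMincard_le {U : SetRel X X} (C : ℕ)
    (h : ∀ n : ℕ, coverMincard T F U n ≤ ((C * (n + 1) : ℕ) : ℕ∞)) :
    coverEntropyEntourage T F U ≤ 0 := by
  refine (ExpGrowth.expGrowthSup_le_of_eventually_le (ENNReal.natCast_ne_top C)
    (.of_forall fun n ↦ ?_)).trans_eq ExpGrowth.expGrowthSup_natCast_add_one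
  simpa using ENat.toENNReal_le.2 (h n)

lemma coverEntropy_eq_zero_of_coverMincard_le [PseudoMetricSpace X] (hF : F.Nonempty)
    (h : ∀ ε > 0, ∃ C : ℕ, ∀ n : ℕ,
      coverMincard T F {p : X × X | dist p.1 p.2 < ε} n ≤ ((C * (n + 1) : ℕ) : ℕ∞)) :
    coverEntropy T F = 0 := by
  refine le_antisymm ?_ (coverEntropy_nonneg T hF)
  rw [coverEntropy_eq_iSup_basis Metric.uniformity_basis_dist]
  refine iSup₂_le fun ε hε ↦ ?_
  obtain ⟨C, hC⟩ := h ε hε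
  exact coverEntropyEntourage_le_zero_of_coverMincard_le C hC

end Dynamics

section OrderedCover

variable {α : Type*}

lemma exists_finset_forall_abs_sub_lt {s : Set α} {Φ : α → ℝ} {N δ : ℝ}
    (hΦ : MapsTo Φ s (Icc 0 N)) (hδ : 0 < δ) :
    ∃ t : Finset α, ↑t ⊆ s ∧ t.card ≤ ⌊N / δ⌋₊ + 1 ∧ ∀ x ∈ s, ∃ c ∈ t, |Φ c - Φ x| < δ := by
  classical
  rcases s.eq_empty_or_nonempty with rfl | ⟨x₀, hx₀⟩
  · exact ⟨∅, by simp, by simp, by simp⟩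
  set level : α → ℕ := fun x ↦ ⌊Φ x / δ⌋₊
  have hrep : ∀ k, ∃ c ∈ s, (∃ x ∈ s, level x = k) → level c = k := fun k ↦
    if h : ∃ x ∈ s, level x = k then
      let ⟨x, hx, hk⟩ := h; ⟨x, hx, fun _ ↦ hk⟩
    else ⟨x₀, hx₀, fun h' ↦ (h h').elim⟩
  choose rep hrep_mem hrep_level using hrep
  refine ⟨(Finset.range (⌊N / δ⌋₊ + 1)).image rep, ?_,
    Finset.card_image_le.trans (Finset.card_range _).le, fun x hx ↦ ⟨rep (level x), ?_, ?_⟩⟩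
  · simpa [Set.subset_def] using fun k _ ↦ hrep_mem k
  · exact Finset.mem_image_of_mem _ <| Finset.mem_range_succ_iff.2 <|
      Nat.floor_mono <| div_le_div_of_nonneg_right (hΦ hx).2 hδ.le
  · have hlevel := hrep_level (level x) ⟨x, hx, rfl⟩
    have hc := hΦ (hrep_mem (level x))
    have hx' := hΦ hx
    have h1 := Nat.floor_le (div_nonneg hc.1 hδ.le)
    have h2 := Nat.lt_floor_add_one (Φ (rep (level x)) / δ)
    have h3 := Nat.floor_le (div_nonneg hx'.1 hδ.le)
    have h4 := Nat.lt_floor_add_one (Φ x / δ)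
    simp only [level] at hlevel
    rw [hlevel] at h1 h2
    rw [abs_sub_lt_iff, ← div_lt_one hδ, ← div_lt_one hδ, sub_div, sub_div]
    constructor <;> linarith

lemma abs_sub_le_abs_sum_sub_of_monotoneOn [LinearOrder α] {ι : Type*} {s : Set α} {I : Finset ι}
    {φ : ι → α → ℝ} (hφ : ∀ i ∈ I, MonotoneOn (φ i) s) {i : ι} (hi : i ∈ I) {x y : α}
    (hx : x ∈ s) (hy : y ∈ s) :
    |φ i x - φ i y| ≤ |∑ j ∈ I, φ j x - ∑ j ∈ I, φ j y| := by
  wlog hxy : x ≤ y generalizing x y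
  · rw [abs_sub_comm, abs_sub_comm (∑ j ∈ I, φ j x)]
    exact this hy hx (le_of_not_ge hxy)
  rw [abs_sub_comm, abs_sub_comm (∑ j ∈ I, φ j x),
    abs_of_nonneg (sub_nonneg.2 (hφ i hi hx hy hxy)), ← Finset.sum_sub_distrib,
    abs_of_nonneg (Finset.sum_nonneg fun j hj ↦ sub_nonneg.2 (hφ j hj hx hy hxy))]
  exact Finset.single_le_sum (f := fun j ↦ φ j y - φ j x)
    (fun j hj ↦ sub_nonneg.2 (hφ j hj hx hy hxy)) hi

theorem exists_finset_forall_dist_lt_of_monotoneOn [LinearOrder α] {ι X : Type*}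
    [PseudoMetricSpace X] {s : Set α} (I : Finset ι) {g : ι → α → X} {φ : ι → α → ℝ}
    (hφ : ∀ i ∈ I, MonotoneOn (φ i) s) (hφs : ∀ i ∈ I, MapsTo (φ i) s (Icc 0 1))
    (hgφ : ∀ i ∈ I, ∀ x ∈ s, ∀ y ∈ s, dist (g i x) (g i y) ≤ |φ i x - φ i y|)
    {δ : ℝ} (hδ : 0 < δ) :
    ∃ t : Finset α, ↑t ⊆ s ∧ t.card ≤ ⌊I.card / δ⌋₊ + 1 ∧
      ∀ x ∈ s, ∃ c ∈ t, ∀ i ∈ I, dist (g i c) (g i x) < δ := by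
  have hsum : MapsTo (fun x ↦ ∑ i ∈ I, φ i x) s (Icc 0 I.card) := fun x hx ↦
    ⟨Finset.sum_nonneg fun i hi ↦ (hφs i hi hx).1,
      (Finset.sum_le_card_nsmul I _ 1 fun i hi ↦ (hφs i hi hx).2).trans_eq (by simp)⟩
  obtain ⟨t, hts, hcard, hcover⟩ := exists_finset_forall_abs_sub_lt hsum hδ
  refine ⟨t, hts, hcard, fun x hx ↦ ?_⟩
  obtain ⟨c, hc, hcx⟩ := hcover x hx
  exact ⟨c, hc, fun i hi ↦ (hgφ i hi c (hts hc) x hx).trans_lt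
    ((abs_sub_le_abs_sum_sub_of_monotoneOn hφ hi (hts hc) hx).trans_lt hcx)⟩

end OrderedCover

lemma exists_mem_Icc_ne_ne_of_continuousOn {X : Type*} [MetricSpace X] {γ : ℝ → X} {x y : ℝ}
    (hγ : ContinuousOn γ (Icc x y)) (hxy : x ≤ y) (hne : γ x ≠ γ y) :
    ∃ w ∈ Icc x y, γ w ≠ γ x ∧ γ w ≠ γ y := by
  have hpos : 0 < dist (γ y) (γ x) := dist_pos.2 hne.symm
  obtain ⟨w, hw, hdist⟩ := intermediate_value_Icc (f := fun w ↦ dist (γ w) (γ x)) hxy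
    (continuous_dist.comp_continuousOn (hγ.prodMk continuousOn_const))
    (show dist (γ y) (γ x) / 2 ∈ Icc (dist (γ x) (γ x)) (dist (γ y) (γ x)) by
      rw [dist_self]; constructor <;> linarith)
  refine ⟨w, hw, fun h ↦ ?_, fun h ↦ ?_⟩ <;> simp only [h, dist_self] at hdist <;> linarith

namespace AddCircle

lemma dist_coe_le_abs_sub {p : ℝ} (u v : ℝ) : dist (u : AddCircle p) v ≤ |u - v| := by
  rw [dist_eq_norm, ← coe_sub]
  exact QuotientAddGroup.norm_mk_le_norm.trans_eq (Real.norm_eq_abs _)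

lemma btw_coe_of_le_of_le {x y z : ℝ} (hxy : x ≤ y) (hyz : y ≤ z) (hzx : z < x + 1) :
    btw (x : AddCircle (1 : ℝ)) y z := by
  rw [QuotientAddGroup.btw_coe_iff, (toIcoMod_eq_self one_pos).2 ⟨hxy, by linarith⟩]
  rcases (hxy.trans hyz).eq_or_lt with rfl | hxz
  · rw [toIocMod_apply_left one_pos]
    linarith
  · rwa [(toIocMod_eq_self one_pos).2 ⟨hxz, by linarith⟩]

lemma btw_zero_coe_coe_iff {u v : ℝ} (hu : u ∈ Ico 0 1) (hv : v ∈ Ico 0 1) :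
    btw (0 : AddCircle (1 : ℝ)) u v ↔ u ≤ v ∨ v = 0 := by
  rw [← coe_zero, QuotientAddGroup.btw_coe_iff,
    (toIcoMod_eq_self one_pos).2 (by simpa using hu)]
  rcases hv.1.eq_or_lt with rfl | hv0
  · simp [hu.2.le]
  · rw [(toIocMod_eq_self one_pos).2 ⟨hv0, by simpa using hv.2.le⟩]
    simp [hv0.ne']

lemma btw_zero_sub_sub {a b c : AddCircle (1 : ℝ)} (h : btw a b c) :
    btw 0 (b - a) (c - a) := by
  change (_ ≤ _)
  simp only [sub_zero]
  exact h

section MonotoneLift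

variable {g : AddCircle (1 : ℝ) → AddCircle (1 : ℝ)}

noncomputable def displacement (g : AddCircle (1 : ℝ) → AddCircle (1 : ℝ)) (x : ℝ) : ℝ :=
  equivIco 1 0 (g x - g 0)

lemma displacement_mem_Ico (x : ℝ) : displacement g x ∈ Ico 0 1 := by
  unfold displacement
  simpa using (equivIco 1 0 (g x - g 0)).2

lemma coe_displacement (x : ℝ) : (displacement g x : AddCircle (1 : ℝ)) = g x - g 0 :=
  coe_equivIco

lemma displacement_eq_zero_iff {x : ℝ} : displacement g x = 0 ↔ g x = g 0 := by
  rw [← coe_eq_zero_iff_of_mem_Ico (by simpa using displacement_mem_Ico x), coe_displacement,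
    sub_eq_zero]

lemma displacement_le_or_eq_zero (hb : ∀ a b c, btw a b c → btw (g a) (g b) (g c)) {x y : ℝ}
    (hx : 0 ≤ x) (hxy : x ≤ y) (hy : y < 1) :
    displacement g x ≤ displacement g y ∨ displacement g y = 0 := by
  have h := btw_zero_sub_sub (hb _ _ _ (btw_coe_of_le_of_le hx hxy (by linarith)))
  rw [coe_zero] at h
  rwa [← coe_displacement, ← coe_displacement,
    btw_zero_coe_coe_iff (displacement_mem_Ico x) (displacement_mem_Ico y)] at h

lemma displacement_le_or_eq_zero_of_eq_zero (hb : ∀ a b c, btw a b c → btw (g a) (g b) (g c))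
    {x y z : ℝ} (hx : 0 ≤ x) (hxy : x ≤ y) (hyz : y ≤ z) (hz : z < 1)
    (hy0 : displacement g y = 0) :
    displacement g z ≤ displacement g x ∨ displacement g x = 0 := by
  have h := btw_zero_sub_sub <| btw_cyclic_left <|
    hb _ _ _ (btw_coe_of_le_of_le hxy hyz (by linarith))
  rwa [displacement_eq_zero_iff.1 hy0, ← coe_displacement, ← coe_displacement,
    btw_zero_coe_coe_iff (displacement_mem_Ico z) (displacement_mem_Ico x)] at h

/-- Once `g` has wound once around the circle it stays at `g 0`: this is where continuity
enters. -/
lemma displacement_eq_zero_of_pos_of_eq_zero (hg : Continuous g)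
    (hb : ∀ a b c, btw a b c → btw (g a) (g b) (g c)) {t y z : ℝ} (ht : 0 ≤ t) (hty : t ≤ y)
    (hyz : y ≤ z) (hz : z < 1) (ht0 : 0 < displacement g t) (hy0 : displacement g y = 0) :
    displacement g z = 0 := by
  by_contra hz0
  have hzt : displacement g z ≤ displacement g t :=
    (displacement_le_or_eq_zero_of_eq_zero hb ht hty hyz hz hy0).resolve_right ht0.ne'
  have hgy := displacement_eq_zero_iff.1 hy0
  have hne : g t ≠ g y := hgy ▸ mt displacement_eq_zero_iff.2 ht0.ne'
  obtain ⟨w, hw, hwt, hwy⟩ := exists_mem_Icc_ne_ne_of_continuousOn (γ := fun w : ℝ ↦ g w)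
    (hg.comp (AddCircle.continuous_mk' 1)).continuousOn hty hne
  have hw0 : displacement g w ≠ 0 := fun h ↦ hwy (hgy ▸ displacement_eq_zero_iff.1 h)
  have hwt' : displacement g w ≠ displacement g t := fun h ↦ hwt (by
    rw [← sub_left_inj (a := g 0), ← coe_displacement, ← coe_displacement, h])
  have htw : displacement g t < displacement g w :=
    ((displacement_le_or_eq_zero hb ht hw.1 (hw.2.trans_lt (hyz.trans_lt hz))).resolve_right
      hw0).lt_of_ne' hwt'
  have hwz : displacement g w ≤ displacement g z :=
    (displacement_le_or_eq_zero hb (ht.trans hw.1) (hw.2.trans hyz) hz).resolve_right hz0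
  linarith

open Classical in
/-- `displacement g`, except that it is `1` instead of `0` after `g` has wound once around the
circle, i.e. after `displacement g` has left `0` and come back. -/
noncomputable def monotoneLift (g : AddCircle (1 : ℝ) → AddCircle (1 : ℝ)) (x : ℝ) : ℝ :=
  if displacement g x = 0 ∧ ∃ t ∈ Icc 0 x, 0 < displacement g t then 1 else displacement g x

lemma monotoneLift_mem_Icc (x : ℝ) : monotoneLift g x ∈ Icc 0 1 := by
  unfold monotoneLift
  split_ifs
  · exact right_mem_Icc.2 zero_le_one
  · exact Ico_subset_Icc_self (displacement_mem_Ico x)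

lemma apply_coe_eq_add_monotoneLift (x : ℝ) :
    g x = g 0 + (monotoneLift g x : AddCircle (1 : ℝ)) := by
  unfold monotoneLift
  split_ifs with h
  · rw [coe_period, add_zero, ← displacement_eq_zero_iff]
    exact h.1
  · rw [coe_displacement, add_sub_cancel]

lemma dist_apply_coe_le (x y : ℝ) :
    dist (g x) (g y) ≤ |monotoneLift g x - monotoneLift g y| := by
  rw [apply_coe_eq_add_monotoneLift (g := g) x, apply_coe_eq_add_monotoneLift (g := g) y,
    dist_add_left]
  exact dist_coe_le_abs_sub _ _

lemma monotoneOn_monotoneLift (hg : Continuous g)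
    (hb : ∀ a b c, btw a b c → btw (g a) (g b) (g c)) : MonotoneOn (monotoneLift g) (Ico 0 1) := by
  intro x hx y hy hxy
  unfold monotoneLift
  split_ifs with hxw hyw hyw
  · exact le_rfl
  · obtain ⟨hx0, t, ht, ht0⟩ := hxw
    exact absurd ⟨displacement_eq_zero_of_pos_of_eq_zero hg hb ht.1 ht.2 hxy hy.2 ht0 hx0, t,
      ⟨ht.1, ht.2.trans hxy⟩, ht0⟩ hyw
  · exact (displacement_mem_Ico x).2.le
  · refine (displacement_le_or_eq_zero hb hx.1 hxy hy.2).elim id fun hy0 ↦ ?_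
    rcases (displacement_mem_Ico x).1.eq_or_lt with hx0 | hx0
    · rw [← hx0, hy0]
    · exact absurd ⟨hy0, x, ⟨hx.1, hxy⟩, hx0⟩ hyw

end MonotoneLift

end AddCircle

section SkewProduct

variable {Θ Y : Type*} {r : Θ → Θ} {f : Θ × Y → Θ × Y}

lemma iterate_mk_eq (hskew : Function.Semiconj Prod.fst f r) (i : ℕ) (θ : Θ) (a : Y) :
    f^[i] (θ, a) = (r^[i] θ, (f^[i] (θ, a)).2) :=
  Prod.ext (hskew.iterate_right i _) rfl

lemma btw_iterate_snd [Btw Y] (hskew : Function.Semiconj Prod.fst f r)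
    (hmono : ∀ (θ : Θ) (a b c : Y), btw a b c → btw (f (θ, a)).2 (f (θ, b)).2 (f (θ, c)).2)
    (θ : Θ) (i : ℕ) {a b c : Y} (h : btw a b c) :
    btw (f^[i] (θ, a)).2 (f^[i] (θ, b)).2 (f^[i] (θ, c)).2 := by
  induction i with
  | zero => exact h
  | succ i ih =>
    simp only [Function.iterate_succ_apply']
    rw [iterate_mk_eq hskew i θ a, iterate_mk_eq hskew i θ b, iterate_mk_eq hskew i θ c]
    exact hmono _ _ _ _ ih

lemma dist_iterate_mk [PseudoMetricSpace Θ] [PseudoMetricSpace Y]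
    (hskew : Function.Semiconj Prod.fst f r) (i : ℕ) (θ : Θ) (a b : Y) :
    dist (f^[i] (θ, a)) (f^[i] (θ, b)) = dist (f^[i] (θ, a)).2 (f^[i] (θ, b)).2 := by
  rw [Prod.dist_eq, hskew.iterate_right, hskew.iterate_right, dist_self,
    max_eq_right dist_nonneg]

end SkewProduct

lemma floor_div_add_one_le_ceil_inv_mul {δ : ℝ} (hδ : 0 < δ) (n : ℕ) :
    ⌊n / δ⌋₊ + 1 ≤ ⌈δ⁻¹⌉₊ * (n + 1) := by
  have hC : 1 ≤ ⌈δ⁻¹⌉₊ := Nat.one_le_iff_ne_zero.2 (Nat.ceil_pos.2 (inv_pos.2 hδ)).ne'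
  have hfloor : ⌊n / δ⌋₊ ≤ ⌈δ⁻¹⌉₊ * n := Nat.floor_le_of_le <| by
    rw [div_eq_mul_inv, mul_comm]
    push_cast
    exact mul_le_mul_of_nonneg_right (Nat.le_ceil _) n.cast_nonneg
  nlinarith

theorem coverMincard_fiber_le {Θ : Type*} [MetricSpace Θ] {r : Θ → Θ}
    {f : Θ × AddCircle (1 : ℝ) → Θ × AddCircle (1 : ℝ)} (hf : Continuous f)
    (hskew : Function.Semiconj Prod.fst f r)
    (hmono : ∀ (θ : Θ) (a b c : AddCircle (1 : ℝ)), btw a b c →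
      btw (f (θ, a)).2 (f (θ, b)).2 (f (θ, c)).2)
    (θ₀ : Θ) {ε : ℝ} (hε : 0 < ε) (n : ℕ) :
    Dynamics.coverMincard f ({θ₀} ×ˢ univ)
      {p : (Θ × AddCircle (1 : ℝ)) × (Θ × AddCircle (1 : ℝ)) | dist p.1 p.2 < ε} n
      ≤ ((⌈ε⁻¹⌉₊ * (n + 1) : ℕ) : ℕ∞) := by
  classical
  set g : ℕ → AddCircle (1 : ℝ) → AddCircle (1 : ℝ) := fun i a ↦ (f^[i] (θ₀, a)).2
  have hg : ∀ i, Continuous (g i) := fun i ↦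
    continuous_snd.comp ((hf.iterate i).comp (Continuous.prodMk_right θ₀))
  obtain ⟨t, hts, hcard, hcover⟩ := exists_finset_forall_dist_lt_of_monotoneOn
    (Finset.range n) (g := fun i (x : ℝ) ↦ g i x) (φ := fun i ↦ AddCircle.monotoneLift (g i))
    (fun i _ ↦ AddCircle.monotoneOn_monotoneLift (hg i) fun _ _ _ ↦
      btw_iterate_snd hskew hmono θ₀ i)
    (fun i _ x _ ↦ AddCircle.monotoneLift_mem_Icc x)
    (fun i _ x _ y _ ↦ AddCircle.dist_apply_coe_le x y) hε
  have hdyn : Dynamics.IsDynCoverOf f ({θ₀} ×ˢ univ)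
      {p : (Θ × AddCircle (1 : ℝ)) × (Θ × AddCircle (1 : ℝ)) | dist p.1 p.2 < ε} n
      (t.image fun x : ℝ ↦ (θ₀, (x : AddCircle (1 : ℝ)))) := by
    rintro ⟨θ, a⟩ ⟨rfl, -⟩
    obtain ⟨x, hx, rfl⟩ := AddCircle.eq_coe_Ico a
    obtain ⟨c, hc, hcx⟩ := hcover x (by simpa using hx)
    refine ⟨(θ, c), Finset.mem_coe.2
      (Finset.mem_image_of_mem (fun x : ℝ ↦ (θ, (x : AddCircle (1 : ℝ)))) hc), ?_⟩
    refine Dynamics.mem_ball_dynEntourage.2 fun k hk ↦ ?_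
    change dist _ _ < ε
    rw [dist_iterate_mk hskew, dist_comm]
    exact hcx k (Finset.mem_range.2 hk)
  rw [Finset.card_range] at hcard
  refine hdyn.coverMincard_le_card.trans ?_
  exact_mod_cast (Finset.card_image_le.trans hcard).trans
    (floor_div_add_one_le_ceil_inv_mul hε n)

theorem stmt12_general {Θ : Type*} [MetricSpace Θ]
    (r : Θ → Θ)
    (f : Θ × AddCircle (1 : ℝ) → Θ × AddCircle (1 : ℝ)) (hf : Continuous f)
    (hskew : ∀ p : Θ × AddCircle (1 : ℝ), (f p).1 = r p.1)
    -- every fibre map preserves the cyclic order of the circle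
    (hmono : ∀ (θ : Θ) (a b c : AddCircle (1 : ℝ)), Btw.btw a b c →
      Btw.btw (f (θ, a)).2 (f (θ, b)).2 (f (θ, c)).2) :
    ∀ θ₀ : Θ,
      -- the Bowen topological entropy of the fibre `{θ₀} × T¹` is zero
      Dynamics.coverEntropy f ({θ₀} ×ˢ (Set.univ : Set (AddCircle (1 : ℝ)))) = 0 ∧
      -- indeed, for every `ε > 0` the minimal number of `(f,n,ε)`-balls needed to cover
      -- the fibre grows at most linearly in `n`
      ∀ ε > (0 : ℝ), ∃ C : ℕ, ∀ n : ℕ,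
        Dynamics.coverMincard f ({θ₀} ×ˢ (Set.univ : Set (AddCircle (1 : ℝ))))
          {p : (Θ × AddCircle (1 : ℝ)) × (Θ × AddCircle (1 : ℝ)) | dist p.1 p.2 < ε} n
          ≤ ((C * (n + 1) : ℕ) : ℕ∞) := by
  refine fun θ₀ ↦ ⟨Dynamics.coverEntropy_eq_zero_of_coverMincard_le ⟨(θ₀, 0), rfl, trivial⟩
    fun ε hε ↦ ?_, fun ε hε ↦ ?_⟩ <;>
  exact ⟨⌈ε⁻¹⌉₊, coverMincard_fiber_le hf hskew hmono θ₀ hε⟩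

theorem stmt12 {Θ : Type*} [MetricSpace Θ] [CompactSpace Θ]
    (r : Θ → Θ) (hr : Continuous r)
    (f : Θ × AddCircle (1 : ℝ) → Θ × AddCircle (1 : ℝ)) (hf : Continuous f)
    (hskew : ∀ p : Θ × AddCircle (1 : ℝ), (f p).1 = r p.1)
    -- every fibre map preserves the cyclic order of the circle
    (hmono : ∀ (θ : Θ) (a b c : AddCircle (1 : ℝ)), Btw.btw a b c →
      Btw.btw (f (θ, a)).2 (f (θ, b)).2 (f (θ, c)).2) :
    ∀ θ₀ : Θ,
      -- the Bowen topological entropy of the fibre `{θ₀} × T¹` is zero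
      Dynamics.coverEntropy f ({θ₀} ×ˢ (Set.univ : Set (AddCircle (1 : ℝ)))) = 0 ∧
      -- indeed, for every `ε > 0` the minimal number of `(f,n,ε)`-balls needed to cover
      -- the fibre grows at most linearly in `n`
      ∀ ε > (0 : ℝ), ∃ C : ℕ, ∀ n : ℕ,
        Dynamics.coverMincard f ({θ₀} ×ˢ (Set.univ : Set (AddCircle (1 : ℝ))))
          {p : (Θ × AddCircle (1 : ℝ)) × (Θ × AddCircle (1 : ℝ)) | dist p.1 p.2 < ε} n
          ≤ ((C * (n + 1) : ℕ) : ℕ∞) :=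
  stmt12_general r f hf hskew hmono
end

section
/- Let f be a QPF circle endomorphism homotopic to the identity (a continuous skew product over an irrational rotation of T¹ with degree-one fibre maps) and let M be a minimal set of f. Then for every (θ,x) ∈ M and every open neighbourhood U of (θ,x), the first-coordinate projection π₁(U ∩ M) contains a nonempty open interval of T¹. -/
/-!
A minimal set `M` is mapped onto itself, so its projection to the base circle is a nonempty
closed set invariant under the irrational rotation, hence the whole circle. By minimality,
every orbit in `M` enters the interior of a closed neighbourhood `K ⊆ U` of `p`, so the circle
is the countable union of the translates of the closed set `π₁(K ∩ M)` by multiples of `-ω`.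
Baire's theorem gives one translate, hence `π₁(K ∩ M)` itself, nonempty interior.
-/

open Filter Topology

/-- A minimal set of a continuous map `g`: a nonempty compact `g`-invariant set containing
no proper nonempty compact `g`-invariant subset. -/
def IsMinimalSet {X : Type*} [TopologicalSpace X] (g : X → X) (M : Set X) : Prop :=
  M.Nonempty ∧ IsCompact M ∧ Set.MapsTo g M M ∧
    ∀ M' : Set X, M' ⊆ M → M'.Nonempty → IsCompact M' → Set.MapsTo g M' M' → M' = M

open Set Function

namespace IsMinimalSet

variable {X : Type*} [TopologicalSpace X] {f : X → X} {M : Set X}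

theorem image_eq (hM : IsMinimalSet f M) (hf : Continuous f) : f '' M = M := by
  obtain ⟨hne, hc, hmaps, hmin⟩ := hM
  exact hmin _ hmaps.image_subset (hne.image f) (hc.image hf)
    fun _ hx => mem_image_of_mem f (hmaps.image_subset hx)

theorem image_eq_of_semiconj (hM : IsMinimalSet f M) (hf : Continuous f) {Y : Type*}
    {π : X → Y} {g : Y → Y} (h : Semiconj π f g) : g '' (π '' M) = π '' M := by
  rw [← h.set_image M, hM.image_eq hf]

theorem subset_iUnion_preimage_iterate (hM : IsMinimalSet f M) (hf : Continuous f)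
    {V : Set X} (hV : IsOpen V) (hVM : (V ∩ M).Nonempty) : M ⊆ ⋃ n : ℕ, f^[n] ⁻¹' V := by
  obtain ⟨-, hc, hmaps, hmin⟩ := hM
  obtain ⟨p, hpV, hpM⟩ := hVM
  intro z hzM
  by_contra hz
  simp only [mem_iUnion, mem_preimage, not_exists] at hz
  set M' := M ∩ ⋂ n : ℕ, f^[n] ⁻¹' Vᶜ
  have hM'_maps : MapsTo f M' M' := fun w ⟨hwM, hw⟩ =>
    ⟨hmaps hwM, mem_iInter.2 fun n => by
      simpa only [mem_preimage, iterate_succ_apply] using mem_iInter.1 hw (n + 1)⟩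
  have hM'_compact : IsCompact M' :=
    hc.inter_right <| isClosed_iInter fun n => hV.isClosed_compl.preimage (hf.iterate n)
  have hM' : M' = M := hmin M' inter_subset_left ⟨z, hzM, mem_iInter.2 hz⟩ hM'_compact hM'_maps
  exact mem_iInter.1 (hM' ▸ hpM : p ∈ M').2 0 hpV

end IsMinimalSet

section TopologicalAddGroup

open scoped Pointwise

variable {G : Type*} [TopologicalSpace G]

theorem IsClosed.eq_univ_of_image_add_eq [AddCommGroup G] [ContinuousAdd G] {A : Set G}
    {a : G} (hd : DenseRange (· • a : ℤ → G)) (hA : IsClosed A) (hne : A.Nonempty)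
    (hinv : (· + a) '' A = A) : A = univ := by
  obtain ⟨x, hx⟩ := hne
  have ha : a ∈ AddAction.stabilizer G A := by
    rw [AddAction.mem_stabilizer_iff, ← image_vadd]
    simpa only [vadd_eq_add, add_comm a] using hinv
  have horbit : range (fun k : ℤ => k • a + x) ⊆ A := by
    rintro _ ⟨k, rfl⟩
    rw [← (AddAction.stabilizer G A).zsmul_mem ha k]
    exact vadd_mem_vadd_set hx
  have hdense : DenseRange (fun k : ℤ => k • a + x) :=
    (add_right_surjective x).denseRange.comp hd (continuous_add_const x)
  rw [← hA.closure_eq, ← (hdense.mono horbit).closure_eq]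

theorem IsClosed.nonempty_interior_of_iUnion_preimage_add_eq_univ [AddGroup G]
    [IsTopologicalAddGroup G] [BaireSpace G] {ι : Type*} [Countable ι] {K : Set G}
    (hK : IsClosed K) {c : ι → G} (hcover : ⋃ i, (· + c i) ⁻¹' K = univ) :
    (interior K).Nonempty := by
  obtain ⟨i, y, hy⟩ :=
    nonempty_interior_of_iUnion_of_closed (fun i => hK.preimage (continuous_add_const (c i)))
      hcover
  change y ∈ interior (Homeomorph.addRight (c i) ⁻¹' K) at hy
  rw [← Homeomorph.preimage_interior] at hy
  exact ⟨_, hy⟩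

end TopologicalAddGroup

theorem IsMinimalSet.nonempty_interior_image_inter {X G : Type*} [TopologicalSpace X]
    [RegularSpace X] [AddGroup G] [TopologicalSpace G] [IsTopologicalAddGroup G] [T2Space G]
    [BaireSpace G] {f : X → X} {M : Set X} (hM : IsMinimalSet f M) (hf : Continuous f)
    {π : X → G} (hπ : Continuous π) {a : G} (hsemi : Semiconj π f (· + a))
    (hsurj : π '' M = univ) {p : X} (hp : p ∈ M) {U : Set X} (hU : U ∈ 𝓝 p) :
    (interior (π '' (U ∩ M))).Nonempty := by
  obtain ⟨K, hK, hK_closed, hKU⟩ := exists_mem_nhds_isClosed_subset hU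
  have hvisit := hM.subset_iUnion_preimage_iterate hf isOpen_interior
    ⟨p, mem_interior_iff_mem_nhds.2 hK, hp⟩
  have hcover : ⋃ n : ℕ, (· + n • a) ⁻¹' (π '' (K ∩ M)) = univ := by
    refine eq_univ_of_forall fun y => ?_
    obtain ⟨z, hzM, rfl⟩ := hsurj.symm ▸ mem_univ y
    obtain ⟨n, hn⟩ := mem_iUnion.1 (hvisit hzM)
    refine mem_iUnion.2 ⟨n, f^[n] z, ⟨interior_subset hn, hM.2.2.1.iterate n hzM⟩, ?_⟩
    rw [(hsemi.iterate_right n).eq, add_right_iterate_apply]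
  have hK'_closed : IsClosed (π '' (K ∩ M)) :=
    ((hM.2.1.inter_left hK_closed).image hπ).isClosed
  exact (hK'_closed.nonempty_interior_of_iUnion_preimage_add_eq_univ hcover).mono <|
    interior_mono <| image_mono <| inter_subset_inter_left M hKU

theorem stmt14_general (ω : ℝ) (hω : Irrational ω)
    (f : AddCircle (1 : ℝ) × AddCircle (1 : ℝ) → AddCircle (1 : ℝ) × AddCircle (1 : ℝ))
    (hf : Continuous f)
    (hskew : ∀ p : AddCircle (1 : ℝ) × AddCircle (1 : ℝ),
      (f p).1 = p.1 + ((ω : ℝ) : AddCircle (1 : ℝ)))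
    (M : Set (AddCircle (1 : ℝ) × AddCircle (1 : ℝ))) (hM : IsMinimalSet f M) :
    ∀ p ∈ M, ∀ U : Set (AddCircle (1 : ℝ) × AddCircle (1 : ℝ)), IsOpen U → p ∈ U →
      (interior (Prod.fst '' (U ∩ M))).Nonempty := by
  have hsemi : Semiconj Prod.fst f (· + ((ω : ℝ) : AddCircle (1 : ℝ))) := hskew
  have hdense : DenseRange (· • ((ω : ℝ) : AddCircle (1 : ℝ)) : ℤ → AddCircle (1 : ℝ)) :=
    AddCircle.denseRange_zsmul_coe_iff.2 (by rwa [div_one])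
  have hproj : Prod.fst '' M = univ :=
    (hM.2.1.image continuous_fst).isClosed.eq_univ_of_image_add_eq hdense (hM.1.image _)
      (hM.image_eq_of_semiconj hf hsemi)
  intro p hp U hU hpU
  exact hM.nonempty_interior_image_inter hf continuous_fst hsemi hproj hp (hU.mem_nhds hpU)

theorem stmt14 (ω : ℝ) (hω : Irrational ω)
    (f : AddCircle (1 : ℝ) × AddCircle (1 : ℝ) → AddCircle (1 : ℝ) × AddCircle (1 : ℝ))
    (hf : Continuous f)
    (hskew : ∀ p : AddCircle (1 : ℝ) × AddCircle (1 : ℝ),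
      (f p).1 = p.1 + ((ω : ℝ) : AddCircle (1 : ℝ)))
    (hhom : (⟨f, hf⟩ : C(AddCircle (1 : ℝ) × AddCircle (1 : ℝ),
        AddCircle (1 : ℝ) × AddCircle (1 : ℝ))).Homotopic
      ⟨fun p => (p.1 + ((ω : ℝ) : AddCircle (1 : ℝ)), p.2),
        (continuous_fst.add continuous_const).prodMk continuous_snd⟩)
    (M : Set (AddCircle (1 : ℝ) × AddCircle (1 : ℝ))) (hM : IsMinimalSet f M) :
    ∀ p ∈ M, ∀ U : Set (AddCircle (1 : ℝ) × AddCircle (1 : ℝ)), IsOpen U → p ∈ U →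
      (interior (Prod.fst '' (U ∩ M))).Nonempty :=
  stmt14_general ω hω f hf hskew M hM
end
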